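/- arXiv:1907.09856 — 6 statements merged into one kernel-verified Lean document; each statement's English description precedes it below -/
import Mathlib

section
/- For all α⁺, λ⁺, α⁻, λ⁻ > 0 and every z ∈ ℝ, the characteristic function of the bilateral Gamma distribution BΓ(α⁺,λ⁺;α⁻,λ⁻) satisfies ∫_ℝ e^{izx} dBΓ(α⁺,λ⁺;α⁻,λ⁻)(x) = (λ⁺/(λ⁺ − iz))^{α⁺} · (λ⁻/(λ⁻ + iz))^{α⁻}, where the complex powers are taken with respect to the principal branch of the complex logarithm. -/
open MeasureTheory Filter Set Topology

/-- The Gamma(α,λ) density: `λ^α t^(α-1) e^(-λt) / Γ(α)` for `t > 0`, and `0` for `t ≤ 0`. -/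
noncomputable def gammaDensity (a l t : ℝ) : ℝ :=
  if 0 < t then l ^ a * t ^ (a - 1) * Real.exp (-l * t) / Real.Gamma a else 0

/-- The Gamma(α,λ) distribution on ℝ. -/
noncomputable def gammaMeasure' (a l : ℝ) : Measure ℝ :=
  volume.withDensity fun t => ENNReal.ofReal (gammaDensity a l t)

/-- The bilateral Gamma distribution BΓ(α⁺,λ⁺;α⁻,λ⁻): the pushforward of
`Gamma(α⁺,λ⁺) ⊗ Gamma(α⁻,λ⁻)` under `(x, y) ↦ x - y`. -/
noncomputable def bilateralGammaMeasure (ap lp am lm : ℝ) : Measure ℝ :=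
  ((gammaMeasure' ap lp).prod (gammaMeasure' am lm)).map fun p => p.1 - p.2

section Aux
open Complex

lemma contOn_aux (a : ℝ) (b : ℂ) :
    ContinuousOn (fun t : ℝ => (t : ℂ) ^ ((a : ℂ) - 1) * Complex.exp (-(b * t))) (Ioi 0) := by
  apply ContinuousOn.mul
  · apply ContinuousOn.cpow_const continuous_ofReal.continuousOn
    intro t ht
    exact Or.inl (by simpa using ht)
  · exact ((continuous_const.mul Complex.continuous_ofReal).neg.cexp).continuousOn

lemma meas_aux (a : ℝ) (b : ℂ) :
    AEStronglyMeasurable (fun t : ℝ => (t : ℂ) ^ ((a : ℂ) - 1) * Complex.exp (-(b * t)))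
      (volume.restrict (Ioi 0)) :=
  (contOn_aux a b).aestronglyMeasurable measurableSet_Ioi

lemma norm_aux {a : ℝ} {b : ℂ} {t : ℝ} (ht : 0 < t) :
    ‖(t : ℂ) ^ ((a : ℂ) - 1) * Complex.exp (-(b * t))‖
      = t ^ (a - 1) * Real.exp (-b.re * t) := by
  rw [norm_mul,
    Complex.norm_cpow_eq_rpow_re_of_pos ht, Complex.norm_exp]
  norm_num

lemma int_aux {a : ℝ} (ha : 0 < a) {c : ℝ} (hc : 0 < c) :
    IntegrableOn (fun t : ℝ => t ^ (a - 1) * Real.exp (-c * t)) (Ioi 0) := by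
  have := integrableOn_rpow_mul_exp_neg_mul_rpow (s := a - 1) (p := 1)
    (b := c) (by linarith) zero_lt_one hc
  simpa [Real.rpow_one] using this

lemma integrable_aux (a : ℝ) (ha : 0 < a) {b : ℂ} (hb : 0 < b.re) :
    IntegrableOn (fun t : ℝ => (t : ℂ) ^ ((a : ℂ) - 1) * Complex.exp (-(b * t))) (Ioi 0) := by
  refine Integrable.mono' (int_aux ha hb) (meas_aux a b) ?_
  filter_upwards [ae_restrict_mem measurableSet_Ioi] with t ht
  rw [norm_aux ht]

/-- `f` is differentiable on the right half plane. -/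
lemma f_diff (a : ℝ) (ha : 0 < a) {b : ℂ} (hb : 0 < b.re) :
    HasDerivAt (fun b : ℂ => ∫ t in Ioi (0:ℝ), (t : ℂ) ^ ((a : ℂ) - 1) * Complex.exp (-(b * t)))
      (∫ t in Ioi (0:ℝ), (t : ℂ) ^ ((a : ℂ) - 1) * (Complex.exp (-(b * t)) * (-t))) b := by
  set ε := b.re / 2 with hε
  have hε2 : 0 < ε := by positivity
  have key := hasDerivAt_integral_of_dominated_loc_of_deriv_le (μ := volume.restrict (Ioi 0))
    (F := fun b (t : ℝ) => (t : ℂ) ^ ((a : ℂ) - 1) * Complex.exp (-(b * t)))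
    (F' := fun b (t : ℝ) => (t : ℂ) ^ ((a : ℂ) - 1) * (Complex.exp (-(b * t)) * (-t)))
    (x₀ := b) (bound := fun t : ℝ => t ^ a * Real.exp (-ε * t)) (Metric.ball_mem_nhds b hε2)
    (Eventually.of_forall fun x => meas_aux a x)
    (integrable_aux a ha hb)
    ?_ ?_ ?_ ?_
  · exact key.2
  · -- measurability of F' b
    refine ContinuousOn.aestronglyMeasurable ?_ measurableSet_Ioi
    exact (contOn_aux a b).mul
      ((continuous_ofReal.neg.continuousOn))
      |>.congr (fun t ht => by simp only [Pi.neg_apply, Pi.mul_apply]; ring)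
  · -- bound
    filter_upwards [ae_restrict_mem measurableSet_Ioi] with t ht x hx
    have htt : (0:ℝ) < t := ht
    have hxre : ε ≤ x.re := by
      have : |x.re - b.re| ≤ ‖x - b‖ := by
        simpa using Complex.abs_re_le_norm (x - b)
      have h2 : ‖x - b‖ < ε := by simpa [Metric.mem_ball, dist_eq_norm] using hx
      have := abs_le.mp this
      have h3 : b.re - ε ≤ x.re := by
        have := this.1
        linarith
      linarith [hε ▸ h3, hb]
    calc ‖(t : ℂ) ^ ((a : ℂ) - 1) * (Complex.exp (-(x * t)) * (-t))‖
        = t ^ (a - 1) * Real.exp (-x.re * t) * t := by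
          rw [norm_mul, norm_mul, ← mul_assoc, ← norm_mul, norm_aux htt]
          simp [abs_of_pos htt]
      _ = t ^ a * Real.exp (-x.re * t) := by
          have h4 : t ^ (a-1) * t = t ^ a := by
            rw [← Real.rpow_add_one (ne_of_gt htt) (a-1)]; norm_num
          rw [mul_right_comm, h4]
      _ ≤ t ^ a * Real.exp (-ε * t) := by
          exact mul_le_mul_of_nonneg_left (Real.exp_le_exp.2 (by nlinarith))
            (Real.rpow_nonneg htt.le a)
  · -- integrability of bound
    have := int_aux (a := a + 1) (by linarith) hε2
    refine this.congr_fun (fun t ht => ?_) measurableSet_Ioi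
    simp [add_sub_cancel_right]
  · -- differentiability
    filter_upwards [ae_restrict_mem measurableSet_Ioi] with t ht x hx
    have h1 : HasDerivAt (fun y : ℂ => -(y * t)) (-t) x := by
      simpa using ((hasDerivAt_id x).mul_const (t : ℂ)).fun_neg
    exact (h1.cexp).const_mul _

lemma key_integral (a : ℝ) (ha : 0 < a) {b : ℂ} (hb : 0 < b.re) :
    ∫ t in Ioi (0:ℝ), (t : ℂ) ^ ((a : ℂ) - 1) * Complex.exp (-(b * t))
      = (1 / b) ^ (a : ℂ) * Complex.Gamma a := by
  set U : Set ℂ := {z : ℂ | 0 < z.re} with hU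
  have hUo : IsOpen U := isOpen_lt continuous_const continuous_re
  have hUc : IsPreconnected U := (convex_halfSpace_re_gt 0).isPreconnected
  set f : ℂ → ℂ := fun b => ∫ t in Ioi (0:ℝ), (t:ℂ)^((a:ℂ)-1) * Complex.exp (-(b*t)) with hfd
  set g : ℂ → ℂ := fun b => (1/b)^(a:ℂ) * Complex.Gamma a with hgd
  have hf : AnalyticOnNhd ℂ f U := by
    refine DifferentiableOn.analyticOnNhd (fun x hx => ?_) hUo
    exact ((f_diff a ha hx).differentiableAt).differentiableWithinAt
  have hg : AnalyticOnNhd ℂ g U := by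
    refine DifferentiableOn.analyticOnNhd (fun x hx => ?_) hUo
    have hxre : 0 < x.re := hx
    have hx0 : x ≠ 0 := fun h => by simp [h] at hxre
    have h1 : DifferentiableAt ℂ (fun b : ℂ => 1/b) x :=
      (differentiableAt_const 1).div differentiableAt_id hx0
    have h2 : (1/x) ∈ Complex.slitPlane := by
      left
      rw [one_div, inv_re]
      have : 0 < Complex.normSq x := Complex.normSq_pos.2 hx0
      positivity
    exact ((h1.cpow (differentiableAt_const _) h2).mul_const _).differentiableWithinAt
  have h1U : (1:ℂ) ∈ U := by simp [hU]
  have freq : ∃ᶠ z in 𝓝[≠] (1:ℂ), f z = g z := by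
    have h0 : Tendsto (fun n : ℕ => (1 + ((n:ℝ)+1)⁻¹ : ℝ)) atTop (𝓝 1) := by
      have h := tendsto_one_div_add_atTop_nhds_zero_nat (𝕜 := ℝ)
      have := tendsto_const_nhds (x := (1:ℝ)) (f := atTop (α := ℕ)) |>.add h
      simpa [one_div] using this
    have h1 : Tendsto (fun n : ℕ => ((1 + ((n:ℝ)+1)⁻¹ : ℝ) : ℂ)) atTop (𝓝 1) := by
      have := (Complex.continuous_ofReal.tendsto 1).comp h0
      simpa [Function.comp_def] using this
    have h2 : Tendsto (fun n : ℕ => ((1 + ((n:ℝ)+1)⁻¹ : ℝ) : ℂ)) atTop (𝓝[≠] 1) := by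
      refine tendsto_nhdsWithin_of_tendsto_nhds_of_eventually_within _ h1
        (Eventually.of_forall fun n => ?_)
      have hn : ((n:ℝ)+1)⁻¹ > 0 := by positivity
      simp only [mem_compl_iff, mem_singleton_iff, Complex.ofReal_eq_one]
      intro h; linarith [h]
    refine h2.frequently (Frequently.of_forall fun n => ?_)
    have hr : 0 < 1 + ((n:ℝ)+1)⁻¹ := by positivity
    have := integral_cpow_mul_exp_neg_mul_Ioi (a := (a:ℂ))
      (r := 1 + ((n:ℝ)+1)⁻¹) (by simpa using ha) hr
    show f _ = g _
    simp only [hfd, hgd]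
    rw [this]
  exact hf.eqOn_of_preconnected_of_frequently_eq hg hUc h1U freq hb

end Aux

lemma cpow_real_mul (r : ℝ) (hr : 0 < r) {w : ℂ} (hw : w ≠ 0) (s : ℂ) :
    ((r : ℂ) * w) ^ s = (r : ℂ) ^ s * w ^ s := by
  have hr' : (r:ℂ) ≠ 0 := Complex.ofReal_ne_zero.2 hr.ne'
  rw [Complex.cpow_def_of_ne_zero (mul_ne_zero hr' hw),
    Complex.log_ofReal_mul hr hw, Complex.ofReal_log hr.le, add_mul, Complex.exp_add,
    ← Complex.cpow_def_of_ne_zero hr', ← Complex.cpow_def_of_ne_zero hw]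

lemma gammaDensity_meas (a l : ℝ) : Measurable (gammaDensity a l) := by
  unfold gammaDensity
  refine Measurable.ite (measurableSet_lt measurable_const measurable_id) ?_ measurable_const
  fun_prop

lemma gammaDensity_nonneg (a l : ℝ) (ha : 0 < a) (hl : 0 < l) (t : ℝ) :
    0 ≤ gammaDensity a l t := by
  unfold gammaDensity
  split
  · have := Real.Gamma_pos_of_pos ha
    have h1 : (0:ℝ) ≤ l ^ a := Real.rpow_nonneg hl.le a
    have h2 : (0:ℝ) ≤ (t:ℝ) ^ (a-1) := Real.rpow_nonneg (by linarith [‹0 < t›]) _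
    positivity
  · rfl

lemma gamma_charFun (a l : ℝ) (ha : 0 < a) (hl : 0 < l) (z : ℝ) :
    ∫ x, Complex.exp (Complex.I * (z:ℂ) * (x:ℂ)) ∂(gammaMeasure' a l)
      = ((l : ℂ) / ((l : ℂ) - Complex.I * (z:ℂ))) ^ (a : ℂ) := by
  set b : ℂ := (l:ℂ) - Complex.I * z with hb
  have hbre : 0 < b.re := by simp [hb, hl]
  have hb0 : b ≠ 0 := fun h => by rw [h] at hbre; simp at hbre
  have hmeas : Measurable (fun t => (gammaDensity a l t).toNNReal) :=
    (gammaDensity_meas a l).real_toNNReal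
  rw [gammaMeasure']
  have hrfl : (fun t => ENNReal.ofReal (gammaDensity a l t))
      = fun t => ((gammaDensity a l t).toNNReal : ENNReal) := rfl
  rw [hrfl]
  rw [integral_withDensity_eq_integral_smul hmeas]
  rw [← setIntegral_eq_integral_of_forall_compl_eq_zero (s := Ioi (0:ℝ))
    (fun x hx => by
      simp only [mem_Ioi, not_lt] at hx
      rw [gammaDensity, if_neg (not_lt.2 hx)]
      simp)]
  have heq : ∀ t ∈ Ioi (0:ℝ), (gammaDensity a l t).toNNReal • Complex.exp (Complex.I * z * t)
      = ((l ^ a : ℝ) : ℂ) / ((Real.Gamma a : ℝ) : ℂ)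
          * ((t:ℂ) ^ ((a:ℂ) - 1) * Complex.exp (-(b * t))) := by
    intro t ht
    have ht' : (0:ℝ) < t := ht
    rw [NNReal.smul_def, Real.coe_toNNReal _ (gammaDensity_nonneg a l ha hl t)]
    rw [gammaDensity, if_pos ht']
    have hc1 : ((t ^ (a-1) : ℝ) : ℂ) = (t:ℂ) ^ ((a:ℂ)-1) := by
      rw [Complex.ofReal_cpow ht'.le]; push_cast; ring_nf
    have hc2 : Complex.exp (-(b * t)) = Complex.exp (-(l * t)) * Complex.exp (Complex.I * z * t) := by
      rw [← Complex.exp_add]; congr 1; rw [hb]; ring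
    rw [Complex.real_smul]
    push_cast [hc1]
    rw [hc2]
    ring_nf
  rw [setIntegral_congr_fun measurableSet_Ioi heq, integral_const_mul, key_integral a ha hbre,
    Complex.Gamma_ofReal]
  have hΓ : ((Real.Gamma a : ℝ) : ℂ) ≠ 0 :=
    Complex.ofReal_ne_zero.2 (Real.Gamma_pos_of_pos ha).ne'
  rw [Complex.ofReal_cpow hl.le]
  have hmul : ((l:ℂ)/b) ^ (a:ℂ) = (l:ℂ) ^ (a:ℂ) * (1/b) ^ (a:ℂ) := by
    rw [← cpow_real_mul l hl (one_div_ne_zero hb0), mul_one_div]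
  rw [hmul]
  field_simp


lemma gammaMeasure'_eq (a l : ℝ) : gammaMeasure' a l = ProbabilityTheory.gammaMeasure a l := by
  unfold gammaMeasure' ProbabilityTheory.gammaMeasure ProbabilityTheory.gammaPDF
  apply withDensity_congr_ae
  have h0 : ∀ᵐ t : ℝ ∂volume, t ≠ 0 := by
    refine ae_iff.2 ?_
    have : {t : ℝ | ¬t ≠ 0} = {0} := by ext t; simp
    rw [this]
    exact Real.volume_singleton
  filter_upwards [h0] with t ht
  unfold gammaDensity ProbabilityTheory.gammaPDFReal
  rcases lt_trichotomy t 0 with h | h | h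
  · rw [if_neg (by linarith), if_neg (by linarith)]
  · exact absurd h ht
  · rw [if_pos h, if_pos h.le]
    congr 1
    ring_nf

lemma gammaProb (a l : ℝ) (ha : 0 < a) (hl : 0 < l) :
    IsProbabilityMeasure (gammaMeasure' a l) := by
  rw [gammaMeasure'_eq]
  exact ProbabilityTheory.isProbabilityMeasure_gammaMeasure ha hl

/-- The characteristic function of the bilateral Gamma distribution is
`(λ⁺/(λ⁺ - iz))^{α⁺} (λ⁻/(λ⁻ + iz))^{α⁻}`, powers taken w.r.t. the principal branch. -/
theorem bilateralGamma_charFun (ap lp am lm : ℝ)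
    (hap : 0 < ap) (hlp : 0 < lp) (ham : 0 < am) (hlm : 0 < lm) (z : ℝ) :
    ∫ x, Complex.exp (Complex.I * (z : ℂ) * (x : ℂ)) ∂(bilateralGammaMeasure ap lp am lm)
      = ((lp : ℂ) / ((lp : ℂ) - Complex.I * (z : ℂ))) ^ (ap : ℂ)
        * ((lm : ℂ) / ((lm : ℂ) + Complex.I * (z : ℂ))) ^ (am : ℂ) := by
  haveI := gammaProb ap lp hap hlp
  haveI := gammaProb am lm ham hlm
  rw [bilateralGammaMeasure]
  rw [integral_map (by fun_prop) ?hsm]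
  case hsm =>
    exact (Continuous.aestronglyMeasurable (by fun_prop))
  have heq : ∀ p : ℝ × ℝ, Complex.exp (Complex.I * z * ((p.1 - p.2 : ℝ) : ℂ))
      = Complex.exp (Complex.I * z * p.1) * Complex.exp (Complex.I * (-z : ℝ) * p.2) := by
    intro p
    rw [← Complex.exp_add]
    push_cast
    ring_nf
  simp only [heq]
  rw [integral_prod_mul (f := fun x : ℝ => Complex.exp (Complex.I * z * x))
    (g := fun y : ℝ => Complex.exp (Complex.I * (-z : ℝ) * y))]
  rw [gamma_charFun ap lp hap hlp z, gamma_charFun am lm ham hlm (-z)]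
  congr 2
  push_cast
  ring_nf
end

section
/- Let λ⁺, α⁻, λ⁻ > 0 and let α⁺ = n be a positive integer. Then for every x > 0, the bilateral Gamma density satisfies f(x) = [(λ⁺)^n (λ⁻)^{α⁻} / ((λ⁺ + λ⁻)^{α⁻} (n−1)!)] · (Σ_{k=0}^{n−1} a_k x^k) · e^{−λ⁺ x}, where a_k = C(n−1, k) · (λ⁺ + λ⁻)^{−(n−1−k)} · Π_{l=0}^{n−2−k} (α⁻ + l) (with the empty product for k = n−1 equal to 1) and C(n−1,k) denotes the binomial coefficient. -/
open MeasureTheory Filter Set Topology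

/-- The bilateral Gamma density `f(x) = ∫₀^∞ g_{α⁺,λ⁺}(x + y) g_{α⁻,λ⁻}(y) dy`. -/
noncomputable def bilateralGammaDensity (ap lp am lm : ℝ) (x : ℝ) : ℝ :=
  ∫ y in Ioi (0 : ℝ), gammaDensity ap lp (x + y) * gammaDensity am lm y

private lemma integrable_aux_s7 {s r : ℝ} (hs : 0 < s) (hr : 0 < r) :
    IntegrableOn (fun y : ℝ => y ^ (s - 1) * Real.exp (-(r * y))) (Ioi 0) := by
  have h := integrableOn_rpow_mul_exp_neg_mul_rpow (s := s - 1) (p := 1) (b := r)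
    (by linarith) one_pos hr
  simpa [Real.rpow_one, neg_mul] using h

private lemma gamma_add_nat {am : ℝ} (ham : 0 < am) (j : ℕ) :
    Real.Gamma (am + j) = (∏ l ∈ Finset.range j, (am + l)) * Real.Gamma am := by
  induction j with
  | zero => simp
  | succ j ih =>
    have h : am + ((j + 1 : ℕ) : ℝ) = (am + j) + 1 := by push_cast; ring
    have hne : am + (j : ℝ) ≠ 0 := by positivity
    rw [h, Real.Gamma_add_one hne, ih, Finset.prod_range_succ]
    ring

/-- If `α⁺ = n` is a positive integer, the bilateral Gamma density on `(0,∞)` is an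
exponential polynomial: `f(x) = [λ⁺ⁿ (λ⁻)^{α⁻}/((λ⁺+λ⁻)^{α⁻}(n-1)!)] (Σ aₖ xᵏ) e^{-λ⁺x}`
with `aₖ = C(n-1,k) (λ⁺+λ⁻)^{-(n-1-k)} Π_{l=0}^{n-2-k}(α⁻+l)`. -/
theorem bilateralGammaDensity_nat (n : ℕ) (hn : 0 < n) (lp am lm : ℝ)
    (hlp : 0 < lp) (ham : 0 < am) (hlm : 0 < lm) (x : ℝ) (hx : 0 < x) :
    bilateralGammaDensity (n : ℝ) lp am lm x
      = lp ^ n * lm ^ am / ((lp + lm) ^ am * (Nat.factorial (n - 1) : ℝ))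
          * (∑ k ∈ Finset.range n,
              ((Nat.choose (n - 1) k : ℝ) * ((lp + lm) ^ (n - 1 - k))⁻¹
                * ∏ l ∈ Finset.range (n - 1 - k), (am + (l : ℝ))) * x ^ k)
          * Real.exp (-lp * x) := by
  obtain ⟨m, rfl⟩ : ∃ m, n = m + 1 := ⟨n - 1, (Nat.succ_pred_eq_of_pos hn).symm⟩
  simp only [Nat.add_sub_cancel]
  have hcpos : 0 < lp + lm := by positivity
  have hb : bilateralGammaDensity ((m + 1 : ℕ) : ℝ) lp am lm x
      = ∫ y in Ioi (0 : ℝ), ∑ k ∈ Finset.range (m + 1),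
          (x ^ k * (Nat.choose m k : ℝ) * lp ^ (m + 1) * lm ^ am * Real.exp (-lp * x)
            / ((Nat.factorial m : ℝ) * Real.Gamma am))
          * (y ^ (am + ((m - k : ℕ) : ℝ) - 1) * Real.exp (-((lp + lm) * y))) := by
    unfold bilateralGammaDensity gammaDensity
    refine setIntegral_congr_fun measurableSet_Ioi (fun y hy => ?_)
    rw [mem_Ioi] at hy
    have hxy : 0 < x + y := by linarith
    rw [if_pos hxy, if_pos hy]
    have h1 : lp ^ (((m + 1 : ℕ) : ℝ)) = lp ^ (m + 1) := Real.rpow_natCast lp (m + 1)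
    have h2 : (x + y) ^ ((((m + 1 : ℕ) : ℝ)) - 1) = (x + y) ^ m := by
      rw [show (((m + 1 : ℕ) : ℝ)) - 1 = ((m : ℕ) : ℝ) by push_cast; ring,
        Real.rpow_natCast]
    have h3 : Real.Gamma (((m + 1 : ℕ) : ℝ)) = (Nat.factorial m : ℝ) := by
      rw [show (((m + 1 : ℕ) : ℝ)) = (m : ℝ) + 1 by push_cast; ring]
      exact Real.Gamma_nat_eq_factorial m
    rw [h1, h2, h3, add_pow]
    simp only [Finset.sum_mul, Finset.sum_div, Finset.mul_sum]
    refine Finset.sum_congr rfl fun k hk => ?_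
    rw [show Real.exp (-lp * (x + y)) = Real.exp (-lp * x) * Real.exp (-lp * y) by
        rw [← Real.exp_add]; congr 1; ring,
      show y ^ (am + ((m - k : ℕ) : ℝ) - 1) = y ^ ((m - k : ℕ)) * y ^ (am - 1) by
        rw [← Real.rpow_natCast y (m - k), ← Real.rpow_add hy]; congr 1; ring,
      show Real.exp (-((lp + lm) * y)) = Real.exp (-lp * y) * Real.exp (-lm * y) by
        rw [← Real.exp_add]; congr 1; ring]
    ring
  have hint : ∀ k ∈ Finset.range (m + 1),
      IntegrableOn (fun y : ℝ =>
        (x ^ k * (Nat.choose m k : ℝ) * lp ^ (m + 1) * lm ^ am * Real.exp (-lp * x)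
          / ((Nat.factorial m : ℝ) * Real.Gamma am))
        * (y ^ (am + ((m - k : ℕ) : ℝ) - 1) * Real.exp (-((lp + lm) * y)))) (Ioi 0) := by
    intro k _
    exact (integrable_aux_s7 (s := am + ((m - k : ℕ) : ℝ)) (by positivity) hcpos).const_mul _
  rw [hb, integral_finset_sum _ hint]
  simp_rw [integral_const_mul]
  rw [Finset.mul_sum, Finset.sum_mul]
  refine Finset.sum_congr rfl fun k hk => ?_
  rw [Real.integral_rpow_mul_exp_neg_mul_Ioi (by positivity) hcpos,
    gamma_add_nat ham (m - k)]
  have hpow : (1 / (lp + lm)) ^ (am + ((m - k : ℕ) : ℝ))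
      = ((lp + lm) ^ am)⁻¹ * (((lp + lm) : ℝ) ^ (m - k))⁻¹ := by
    rw [Real.rpow_add (by positivity), one_div, Real.inv_rpow hcpos.le,
      Real.inv_rpow hcpos.le, Real.rpow_natCast]
  rw [hpow]
  have hG : (0 : ℝ) < Real.Gamma am := Real.Gamma_pos_of_pos ham
  have hf : (0 : ℝ) < (Nat.factorial m : ℝ) := by positivity
  have hca : (0 : ℝ) < (lp + lm) ^ am := Real.rpow_pos_of_pos hcpos _
  have hcn : (0 : ℝ) < ((lp + lm) : ℝ) ^ (m - k) := by positivity
  field_simp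
end

section
/- Let α⁺, λ⁺, α⁻, λ⁻ > 0 and let N be the unique nonnegative integer satisfying N < α⁺ + α⁻ ≤ N + 1. Then the bilateral Gamma density f is N times continuously differentiable on ℝ ∖ {0}. -/
open MeasureTheory Filter Set Topology

namespace BG

lemma integrable_aux1 {p c : ℝ} (hp : -1 < p) (hc : 0 < c) :
    IntegrableOn (fun y : ℝ => y ^ p * Real.exp (-(c * y))) (Ioi 0) := by
  have h := integrableOn_rpow_mul_exp_neg_mul_rpow hp zero_lt_one hc
  simpa [Real.rpow_one, neg_mul] using h

lemma contOn_aux (p c a r : ℝ) (ha : 0 ≤ a) :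
    ContinuousOn (fun y : ℝ => y ^ p * Real.exp (-(c * y)) * (a + y) ^ r) (Ioi 0) := by
  intro y hy
  have hy0 : (0:ℝ) < y := hy
  apply ContinuousAt.continuousWithinAt
  have h1 : ContinuousAt (fun y : ℝ => y ^ p) y :=
    Real.continuousAt_rpow_const y p (Or.inl hy0.ne')
  have h2 : ContinuousAt (fun y : ℝ => Real.exp (-(c * y))) y := by fun_prop
  have h3 : ContinuousAt (fun y : ℝ => (a + y) ^ r) y := by
    have : ContinuousAt (fun y : ℝ => a + y) y := by fun_prop
    exact this.rpow_const (Or.inl (by positivity))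
  exact (h1.mul h2).mul h3

lemma integrable_aux2 {p c : ℝ} (a r : ℝ) (hp : -1 < p) (hc : 0 < c) (ha : 0 < a) :
    IntegrableOn (fun y : ℝ => y ^ p * Real.exp (-(c * y)) * (a + y) ^ r) (Ioi 0) := by
  set M : ℕ := ⌈r⌉₊ with hM
  have hrM : r ≤ (M : ℝ) := Nat.le_ceil r
  have hbound : Integrable
      (fun y : ℝ => a ^ (r - M) * 2 ^ (M - 1) *
        (a ^ M * (y ^ p * Real.exp (-(c * y))) + y ^ (p + M) * Real.exp (-(c * y))))
      (volume.restrict (Ioi 0)) := by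
    exact (((integrable_aux1 hp hc).const_mul (a ^ M)).add
      (integrable_aux1 (by have : (0:ℝ) ≤ (M:ℝ) := Nat.cast_nonneg M; linarith) hc)).const_mul _
  refine Integrable.mono' hbound
    ((contOn_aux p c a r ha.le).aestronglyMeasurable measurableSet_Ioi) ?_
  refine (ae_restrict_iff' measurableSet_Ioi).2 (ae_of_all _ fun y hy => ?_)
  have hy0 : (0:ℝ) < y := hy
  have hay : (0:ℝ) < a + y := by linarith
  have h0 : 0 ≤ y ^ p * Real.exp (-(c * y)) * (a + y) ^ r := by positivity
  rw [Real.norm_of_nonneg h0]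
  have step1 : (a + y) ^ r ≤ (a + y) ^ (M : ℝ) * a ^ (r - M) := by
    have hsplit : (a + y) ^ r = (a + y) ^ (M : ℝ) * (a + y) ^ (r - M) := by
      rw [← Real.rpow_add hay]; ring_nf
    rw [hsplit]
    exact mul_le_mul_of_nonneg_left
      (Real.rpow_le_rpow_of_nonpos ha (by linarith) (by linarith))
      (Real.rpow_nonneg hay.le _)
  have step2 : (a + y) ^ (M : ℝ) ≤ 2 ^ (M - 1) * (a ^ M + y ^ M) := by
    rw [Real.rpow_natCast]
    exact add_pow_le ha.le hy0.le M
  have hyP : y ^ p * y ^ (M : ℕ) = y ^ (p + M) := by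
    rw [← Real.rpow_natCast y M, ← Real.rpow_add hy0]
  calc y ^ p * Real.exp (-(c * y)) * (a + y) ^ r
      ≤ y ^ p * Real.exp (-(c * y)) * ((a + y) ^ (M : ℝ) * a ^ (r - M)) :=
        mul_le_mul_of_nonneg_left step1 (by positivity)
    _ ≤ y ^ p * Real.exp (-(c * y)) * ((2 ^ (M - 1) * (a ^ M + y ^ M)) * a ^ (r - M)) :=
        mul_le_mul_of_nonneg_left
          (mul_le_mul_of_nonneg_right step2 (Real.rpow_nonneg ha.le _)) (by positivity)
    _ = a ^ (r - M) * 2 ^ (M - 1) *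
        (a ^ M * (y ^ p * Real.exp (-(c * y))) + y ^ (p + M) * Real.exp (-(c * y))) := by
        rw [← hyP]; ring

/-- The integrand of the parametric integral. -/
noncomputable def K (p l q m x y : ℝ) : ℝ :=
  y ^ p * Real.exp (-(l * y)) * ((x + y) ^ q * Real.exp (-(m * (x + y))))

/-- The parametric integral. -/
noncomputable def Phi (p l q m : ℝ) (x : ℝ) : ℝ := ∫ y in Ioi (0 : ℝ), K p l q m x y

lemma K_eq (p l q m x y : ℝ) :
    K p l q m x y = Real.exp (-(m * x)) * (y ^ p * Real.exp (-((l + m) * y)) * (x + y) ^ q) := by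
  unfold K
  rw [show -(m * (x + y)) = -(m * x) + -(m * y) by ring, Real.exp_add,
    show -((l + m) * y) = -(l * y) + -(m * y) by ring, Real.exp_add]
  ring

lemma K_nonneg {p l q m x y : ℝ} (hx : 0 ≤ x) (hy : 0 ≤ y) : 0 ≤ K p l q m x y := by
  unfold K
  have h1 : (0:ℝ) ≤ y ^ p := Real.rpow_nonneg hy p
  have h2 : (0:ℝ) ≤ (x + y) ^ q := Real.rpow_nonneg (by linarith) q
  positivity

lemma K_integrableOn {p l m : ℝ} (q : ℝ) (hp : -1 < p) (hl : 0 < l) (hm : 0 < m)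
    {x : ℝ} (hx : 0 < x) : IntegrableOn (fun y => K p l q m x y) (Ioi 0) := by
  simp_rw [K_eq]
  exact (integrable_aux2 x q hp (by linarith) hx).const_mul _

lemma K_contOn {p l q m x : ℝ} (hx : 0 ≤ x) :
    ContinuousOn (fun y => K p l q m x y) (Ioi 0) := by
  simp_rw [K_eq]
  exact continuousOn_const.mul (contOn_aux p (l + m) x q hx)

lemma K_le {p l q m a b x y : ℝ} (hm : 0 ≤ m) (ha : 0 < a) (hax : a ≤ x) (hxb : x ≤ b)
    (hy : 0 < y) :
    K p l q m x y ≤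
      Real.exp (-(m * a)) * (y ^ p * Real.exp (-((l + m) * y)) * ((a + y) ^ q + (b + y) ^ q)) := by
  rw [K_eq]
  have hxy : 0 < x + y := by linarith
  have h1 : (x + y) ^ q ≤ (a + y) ^ q + (b + y) ^ q := by
    rcases le_or_gt 0 q with h | h
    · exact (Real.rpow_le_rpow hxy.le (by linarith) h).trans
        (le_add_of_nonneg_left (Real.rpow_nonneg (by linarith) q))
    · exact (Real.rpow_le_rpow_of_nonpos (by linarith) (by linarith) h.le).trans
        (le_add_of_nonneg_right (Real.rpow_nonneg (by linarith) q))
  have h2 : Real.exp (-(m * x)) ≤ Real.exp (-(m * a)) := by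
    apply Real.exp_le_exp.2; nlinarith
  have h3 : (0:ℝ) ≤ y ^ p * Real.exp (-((l + m) * y)) :=
    mul_nonneg (Real.rpow_nonneg hy.le p) (Real.exp_pos _).le
  calc Real.exp (-(m * x)) * (y ^ p * Real.exp (-((l + m) * y)) * (x + y) ^ q)
      ≤ Real.exp (-(m * a)) * (y ^ p * Real.exp (-((l + m) * y)) * (x + y) ^ q) := by
        apply mul_le_mul_of_nonneg_right h2
        exact mul_nonneg h3 (Real.rpow_nonneg hxy.le q)
    _ ≤ Real.exp (-(m * a)) * (y ^ p * Real.exp (-((l + m) * y)) * ((a + y) ^ q + (b + y) ^ q)) := by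
        apply mul_le_mul_of_nonneg_left _ (Real.exp_pos _).le
        exact mul_le_mul_of_nonneg_left h1 h3

lemma K_hasDerivAt {p l q m x y : ℝ} (hxy : 0 < x + y) :
    HasDerivAt (fun x' => K p l q m x' y)
      (q * K p l (q - 1) m x y - m * K p l q m x y) x := by
  have h1 : HasDerivAt (fun x' : ℝ => x' + y) 1 x := (hasDerivAt_id x).add_const y
  have h2 : HasDerivAt (fun x' : ℝ => (x' + y) ^ q) (1 * q * (x + y) ^ (q - 1)) x :=
    h1.rpow_const (Or.inl hxy.ne')
  have h3 : HasDerivAt (fun x' : ℝ => Real.exp (-(m * (x' + y))))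
      (Real.exp (-(m * (x + y))) * -m) x := by
    have hi : HasDerivAt (fun x' : ℝ => -(m * (x' + y))) (-m) x := by
      have := (h1.const_mul m).neg; simp only [mul_one] at this; exact this
    simpa using hi.exp
  have h4 := (h2.mul h3).const_mul (y ^ p * Real.exp (-(l * y)))
  refine h4.congr_deriv ?_
  unfold K
  ring

lemma hasDerivAt_Phi {p l m : ℝ} (hp : -1 < p) (hl : 0 < l) (hm : 0 < m) (q : ℝ)
    {x : ℝ} (hx : 0 < x) :
    HasDerivAt (Phi p l q m) (q * Phi p l (q - 1) m x - m * Phi p l q m x) x := by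
  set a : ℝ := x / 2 with ha_def
  set b : ℝ := x + x / 2 with hb_def
  have ha : 0 < a := by positivity
  set bound : ℝ → ℝ := fun y =>
    |q| * Real.exp (-(m * a)) * (y ^ p * Real.exp (-((l + m) * y)) * ((a + y) ^ (q - 1) + (b + y) ^ (q - 1))) +
    m * Real.exp (-(m * a)) * (y ^ p * Real.exp (-((l + m) * y)) * ((a + y) ^ q + (b + y) ^ q))
    with hbound_def
  have key := hasDerivAt_integral_of_dominated_loc_of_deriv_le (μ := volume.restrict (Ioi 0))
    (F := fun x' y => K p l q m x' y)
    (F' := fun x' y => q * K p l (q - 1) m x' y - m * K p l q m x' y)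
    (bound := bound) (x₀ := x) (Metric.ball_mem_nhds x (half_pos hx))
    (by filter_upwards [Ioi_mem_nhds hx] with x' hx'
        exact ((K_contOn (le_of_lt hx')).aestronglyMeasurable measurableSet_Ioi))
    (K_integrableOn q hp hl hm hx)
    (((continuousOn_const.mul (K_contOn hx.le)).sub
        (continuousOn_const.mul (K_contOn hx.le))).aestronglyMeasurable measurableSet_Ioi)
    ?_ ?_ ?_
  · have heq : (∫ y in Ioi (0:ℝ), (q * K p l (q - 1) m x y - m * K p l q m x y)) =
        q * Phi p l (q - 1) m x - m * Phi p l q m x := by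
      rw [integral_sub ((K_integrableOn (q-1) hp hl hm hx).const_mul q)
        ((K_integrableOn q hp hl hm hx).const_mul m),
        integral_const_mul, integral_const_mul]
      rfl
    rw [heq] at key
    exact key.2
  · -- bound
    refine (ae_restrict_iff' measurableSet_Ioi).2 (ae_of_all _ fun y hy x' hx' => ?_)
    have hy0 : (0:ℝ) < y := hy
    rw [Real.ball_eq_Ioo] at hx'
    have hax : a ≤ x' := by rw [ha_def]; linarith [hx'.1, hx'.2]
    have hxb : x' ≤ b := le_of_lt hx'.2
    have hx'0 : (0:ℝ) < x' := lt_of_lt_of_le ha hax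
    have h1 := K_le (p := p) (l := l) (q := q - 1) hm.le ha hax hxb hy0
    have h2 := K_le (p := p) (l := l) (q := q) hm.le ha hax hxb hy0
    have hn1 : 0 ≤ K p l (q-1) m x' y := K_nonneg hx'0.le hy0.le
    have hn2 : 0 ≤ K p l q m x' y := K_nonneg hx'0.le hy0.le
    have : ‖q * K p l (q - 1) m x' y - m * K p l q m x' y‖ ≤
        |q| * K p l (q - 1) m x' y + m * K p l q m x' y := by
      refine (norm_sub_le _ _).trans ?_
      rw [Real.norm_eq_abs, Real.norm_eq_abs, abs_mul, abs_mul,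
        abs_of_nonneg hn1, abs_of_nonneg hn2, abs_of_pos hm]
    refine this.trans ?_
    rw [hbound_def]
    have e1 := mul_le_mul_of_nonneg_left h1 (abs_nonneg q)
    have e2 := mul_le_mul_of_nonneg_left h2 hm.le
    calc |q| * K p l (q - 1) m x' y + m * K p l q m x' y ≤
        |q| * (Real.exp (-(m * a)) * (y ^ p * Real.exp (-((l + m) * y)) * ((a + y) ^ (q-1) + (b + y) ^ (q-1)))) +
        m * (Real.exp (-(m * a)) * (y ^ p * Real.exp (-((l + m) * y)) * ((a + y) ^ q + (b + y) ^ q))) :=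
          add_le_add e1 e2
      _ = _ := by ring
  · -- integrability of bound
    rw [hbound_def]
    have hlm : (0:ℝ) < l + m := by linarith
    have i1 := integrable_aux2 a (q-1) hp hlm ha
    have i2 := integrable_aux2 b (q-1) hp hlm (by positivity)
    have i3 := integrable_aux2 a q hp hlm ha
    have i4 := integrable_aux2 b q hp hlm (by positivity)
    have : Integrable (fun y : ℝ =>
        |q| * Real.exp (-(m * a)) * ((y ^ p * Real.exp (-((l + m) * y)) * (a + y) ^ (q-1)) + (y ^ p * Real.exp (-((l + m) * y)) * (b + y) ^ (q-1))) +
        m * Real.exp (-(m * a)) * ((y ^ p * Real.exp (-((l + m) * y)) * (a + y) ^ q) + (y ^ p * Real.exp (-((l + m) * y)) * (b + y) ^ q)))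
        (volume.restrict (Ioi 0)) :=
      ((i1.add i2).const_mul _).add ((i3.add i4).const_mul _)
    exact this.congr (ae_of_all _ fun y => by ring)
  · -- differentiability
    refine (ae_restrict_iff' measurableSet_Ioi).2 (ae_of_all _ fun y hy x' hx' => ?_)
    have hy0 : (0:ℝ) < y := hy
    rw [Real.ball_eq_Ioo] at hx'
    have : 0 < x' + y := by
      have h := hx'.1; nlinarith
    exact K_hasDerivAt this

lemma Phi_contDiffOn {p l m : ℝ} (hp : -1 < p) (hl : 0 < l) (hm : 0 < m) (n : ℕ) :
    ∀ q : ℝ, ContDiffOn ℝ n (Phi p l q m) (Ioi 0) := by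
  induction n with
  | zero =>
    intro q
    simp only [Nat.cast_zero, contDiffOn_zero]
    intro x hx
    exact ((hasDerivAt_Phi hp hl hm q hx).continuousAt).continuousWithinAt
  | succ n ih =>
    intro q
    have hcast : ((n + 1 : ℕ) : WithTop ℕ∞) = (n : WithTop ℕ∞) + 1 := by push_cast; rfl
    rw [hcast, contDiffOn_succ_iff_deriv_of_isOpen isOpen_Ioi]
    refine ⟨fun x hx => ((hasDerivAt_Phi hp hl hm q hx).differentiableAt).differentiableWithinAt,
      by simp, ?_⟩
    have hEq : ∀ x ∈ Ioi (0:ℝ), deriv (Phi p l q m) x =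
        q * Phi p l (q - 1) m x - m * Phi p l q m x := fun x hx =>
      (hasDerivAt_Phi hp hl hm q hx).deriv
    exact ContDiffOn.congr ((contDiffOn_const.mul (ih (q - 1))).sub
      (contDiffOn_const.mul (ih q))) hEq

lemma eq_pos {ap lp am lm : ℝ} {x : ℝ} (hx : 0 < x) :
    bilateralGammaDensity ap lp am lm x =
      (lp ^ ap * lm ^ am / (Real.Gamma ap * Real.Gamma am)) * Phi (am - 1) lm (ap - 1) lp x := by
  unfold bilateralGammaDensity Phi
  rw [← integral_const_mul]
  refine setIntegral_congr_fun measurableSet_Ioi fun y hy => ?_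
  have hy0 : (0:ℝ) < y := hy
  have hxy : 0 < x + y := by linarith
  unfold gammaDensity K
  rw [if_pos hxy, if_pos hy0,
    show -lp * (x + y) = -(lp * (x + y)) by ring, show -lm * y = -(lm * y) by ring]
  ring

lemma eq_neg {ap lp am lm : ℝ} {x : ℝ} (hx : x < 0) :
    bilateralGammaDensity ap lp am lm x =
      (lp ^ ap * lm ^ am / (Real.Gamma ap * Real.Gamma am)) * Phi (ap - 1) lp (am - 1) lm (-x) := by
  have hnx : 0 < -x := by linarith
  set h : ℝ → ℝ := fun y => gammaDensity ap lp (x + y) * gammaDensity am lm y with hh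
  have stepA : bilateralGammaDensity ap lp am lm x = ∫ y in Ioi (0:ℝ), (Ioi (-x)).indicator h y := by
    unfold bilateralGammaDensity
    refine setIntegral_congr_fun measurableSet_Ioi fun y hy => ?_
    by_cases hmem : y ∈ Ioi (-x)
    · rw [indicator_of_mem hmem]
    · rw [indicator_of_notMem hmem]
      have : x + y ≤ 0 := by simp only [mem_Ioi, not_lt] at hmem; linarith
      simp only [gammaDensity, if_neg (not_lt.2 this), zero_mul]
  have stepB : (∫ y in Ioi (0:ℝ), (Ioi (-x)).indicator h y) = ∫ y in Ioi (-x), h y := by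
    rw [setIntegral_indicator measurableSet_Ioi, Ioi_inter_Ioi, max_eq_right hnx.le]
  have stepC : (∫ y in Ioi (-x), h y) = ∫ u in Ioi (0:ℝ), h (u + -x) := by
    have hmp := (measurePreserving_add_right (volume : Measure ℝ) (-x)).setIntegral_preimage_emb
      (measurableEmbedding_addRight (-x)) h (Ioi (-x))
    rw [← hmp]
    congr 1
    ext u
    simp [lt_neg_add_iff_add_lt]
  have stepD : (∫ u in Ioi (0:ℝ), h (u + -x)) =
      (lp ^ ap * lm ^ am / (Real.Gamma ap * Real.Gamma am)) * Phi (ap - 1) lp (am - 1) lm (-x) := by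
    unfold Phi
    rw [← integral_const_mul]
    refine setIntegral_congr_fun measurableSet_Ioi fun u hu => ?_
    have hu0 : (0:ℝ) < u := hu
    have hux : 0 < u + -x := by linarith
    rw [hh]
    simp only
    unfold gammaDensity K
    rw [show x + (u + -x) = u by ring, if_pos hu0, if_pos hux,
      show -lp * u = -(lp * u) by ring, show -lm * (u + -x) = -(lm * (-x + u)) by ring,
      show (u + -x) ^ (am - 1) = (-x + u) ^ (am - 1) by ring_nf]
    ring
  rw [stepA, stepB, stepC, stepD]

end BG


/-- If `N` is the nonnegative integer with `N < α⁺ + α⁻ ≤ N + 1`, then the bilateral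
Gamma density is `N` times continuously differentiable on `ℝ \ {0}`. -/
theorem bilateralGammaDensity_smoothness_off_zero (ap lp am lm : ℝ)
    (hap : 0 < ap) (hlp : 0 < lp) (ham : 0 < am) (hlm : 0 < lm)
    (N : ℕ) (hN1 : (N : ℝ) < ap + am) (hN2 : ap + am ≤ (N : ℝ) + 1) :
    ContDiffOn ℝ N (bilateralGammaDensity ap lp am lm) {(0 : ℝ)}ᶜ := by
  set C : ℝ := lp ^ ap * lm ^ am / (Real.Gamma ap * Real.Gamma am) with hC
  apply contDiffOn_of_locally_contDiffOn
  intro x hx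
  rcases (show x ≠ 0 from hx).lt_or_gt with h | h
  · refine ⟨Iio 0, isOpen_Iio, h, ?_⟩
    have h1 : ContDiffOn ℝ N (fun x : ℝ => C * BG.Phi (ap - 1) lp (am - 1) lm (-x)) (Iio 0) := by
      refine contDiffOn_const.mul ?_
      exact (BG.Phi_contDiffOn (by linarith) hlp hlm N (am - 1)).comp
        contDiff_neg.contDiffOn (fun z hz => by simpa using neg_pos.2 (mem_Iio.1 hz))
    exact ((h1.congr fun z hz => BG.eq_neg hz).mono inter_subset_right)
  · refine ⟨Ioi 0, isOpen_Ioi, h, ?_⟩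
    have h1 : ContDiffOn ℝ N (fun x : ℝ => C * BG.Phi (am - 1) lm (ap - 1) lp x) (Ioi 0) :=
      contDiffOn_const.mul (BG.Phi_contDiffOn (by linarith) hlm hlp N (ap - 1))
    exact ((h1.congr fun z hz => BG.eq_pos hz).mono inter_subset_right)
end

section
/- Let α⁺, λ⁺, α⁻, λ⁻ > 0 with α⁺ > 1 and α⁻ > 1. Then there exists a point x₀ ∈ (−(α⁻ − 1)/λ⁻, (α⁺ − 1)/λ⁺) such that the bilateral Gamma density f is strictly increasing on (−∞, x₀) and strictly decreasing on (x₀, ∞); moreover x₀ = 0 if and only if λ⁻α⁺ − λ⁺α⁻ = λ⁻ − λ⁺, x₀ > 0 if and only if λ⁻α⁺ − λ⁺α⁻ > λ⁻ − λ⁺, and x₀ < 0 if and only if λ⁻α⁺ − λ⁺α⁻ < λ⁻ − λ⁺. -/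
open MeasureTheory Filter Set Topology

namespace BG

noncomputable def gdD (a l t : ℝ) : ℝ :=
  if 0 < t then l ^ a * ((a - 1) * t ^ (a - 2) - l * t ^ (a - 1)) * Real.exp (-l * t) / Real.Gamma a
  else 0

variable {a l t : ℝ}

lemma gd_of_nonpos (h : t ≤ 0) : gammaDensity a l t = 0 := if_neg (not_lt.mpr h)

lemma gd_of_pos (h : 0 < t) :
    gammaDensity a l t = l ^ a * t ^ (a - 1) * Real.exp (-l * t) / Real.Gamma a := if_pos h

lemma gdD_of_pos (h : 0 < t) :
    gdD a l t = l ^ a * ((a - 1) * t ^ (a - 2) - l * t ^ (a - 1)) * Real.exp (-l * t) /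
      Real.Gamma a := if_pos h

lemma gd_nonneg (ha : 0 < a) (hl : 0 < l) : 0 ≤ gammaDensity a l t := by
  unfold gammaDensity
  split_ifs with h
  · have := Real.Gamma_pos_of_pos ha
    positivity
  · exact le_refl _
  
lemma gd_pos (ha : 0 < a) (hl : 0 < l) (ht : 0 < t) : 0 < gammaDensity a l t := by
  rw [gd_of_pos ht]
  have := Real.Gamma_pos_of_pos ha
  positivity

lemma measurable_gd : Measurable (gammaDensity a l) := by
  unfold gammaDensity
  refine Measurable.ite measurableSet_Ioi ?_ measurable_const
  fun_prop

lemma measurable_gdD : Measurable (gdD a l) := by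
  unfold gdD
  refine Measurable.ite measurableSet_Ioi ?_ measurable_const
  fun_prop

lemma gd_eq_max (ha : 1 < a) :
    gammaDensity a l t = l ^ a * (max t 0) ^ (a - 1) * Real.exp (-l * t) / Real.Gamma a := by
  unfold gammaDensity
  split_ifs with h
  · rw [max_eq_left h.le]
  · rw [max_eq_right (not_lt.mp h), Real.zero_rpow (by linarith), mul_zero, zero_mul, zero_div]

lemma continuous_gd (ha : 1 < a) : Continuous (gammaDensity a l) := by
  have : Continuous fun t : ℝ => (max t 0) ^ (a - 1) := by
    rw [continuous_iff_continuousAt]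
    intro x
    exact (Real.continuousAt_rpow_const _ _ (Or.inr (by linarith))).comp
      ((continuous_id.max continuous_const).continuousAt)
  have h2 : Continuous fun t : ℝ =>
      l ^ a * (max t 0) ^ (a - 1) * Real.exp (-l * t) / Real.Gamma a := by
    apply Continuous.div_const
    exact (continuous_const.mul this).mul (Real.continuous_exp.comp (continuous_const.mul continuous_id))
  refine h2.congr fun x => ?_
  rw [gd_eq_max ha]

lemma pow_exp_bound {n : ℕ} {l t : ℝ} (hl : 0 < l) (ht : 0 ≤ t) :
    t ^ n * Real.exp (-l * t) ≤ ((n : ℝ) / l) ^ n ∨ n = 0 := by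
  rcases Nat.eq_zero_or_pos n with h | h
  · exact Or.inr h
  left
  have hn' : (0:ℝ) < n := by exact_mod_cast h
  have h1 : l * t / n ≤ Real.exp (l * t / n) := by
    nlinarith [Real.add_one_le_exp (l * t / n)]
  have h2 : (l * t / n) ^ n ≤ Real.exp (l * t) := by
    calc (l * t / n) ^ n ≤ (Real.exp (l * t / n)) ^ n :=
          pow_le_pow_left₀ (by positivity) h1 n
      _ = Real.exp (l * t) := by
          rw [← Real.exp_nat_mul]; congr 1; field_simp
  have h3 : t ^ n = ((n:ℝ)/l) ^ n * (l * t / n) ^ n := by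
    rw [← mul_pow]; congr 1; field_simp
  calc t ^ n * Real.exp (-l * t)
      = ((n:ℝ)/l)^n * ((l*t/n)^n * Real.exp (-l*t)) := by rw [h3]; ring
    _ ≤ ((n:ℝ)/l)^n * (Real.exp (l*t) * Real.exp (-l*t)) := by
        refine mul_le_mul_of_nonneg_left ?_ (by positivity)
        exact mul_le_mul_of_nonneg_right h2 (Real.exp_nonneg _)
    _ = ((n:ℝ)/l)^n := by rw [← Real.exp_add]; simp

lemma rpow_exp_bound {a l : ℝ} (ha : 1 < a) (hl : 0 < l) :
    ∃ C, 0 < C ∧ ∀ t : ℝ, 0 < t → t ^ (a-1) * Real.exp (-l * t) ≤ C := by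
  set n := ⌈a - 1⌉₊ with hn
  have hn1 : 1 ≤ n := Nat.one_le_ceil_iff.mpr (by linarith)
  refine ⟨max 1 (((n:ℝ)/l)^n), lt_of_lt_of_le one_pos (le_max_left _ _), ?_⟩
  intro t ht
  rcases le_total t 1 with h | h
  · refine le_trans ?_ (le_max_left _ _)
    have h1 : t ^ (a-1) ≤ 1 := Real.rpow_le_one ht.le h (by linarith)
    have h2 : Real.exp (-l * t) ≤ 1 := Real.exp_le_one_iff.mpr (by nlinarith)
    have h3 : (0:ℝ) ≤ t ^ (a-1) := Real.rpow_nonneg ht.le _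
    nlinarith [Real.exp_pos (-l * t)]
  · refine le_trans ?_ (le_max_right _ _)
    have h1 : t ^ (a-1) ≤ t ^ ((n:ℕ):ℝ) :=
      Real.rpow_le_rpow_of_exponent_le h (Nat.le_ceil _)
    have h2 : t ^ ((n:ℕ):ℝ) = t ^ n := Real.rpow_natCast t n
    have h4 := pow_exp_bound (n := n) hl (by linarith : (0:ℝ) ≤ t)
    rcases h4 with h4 | h4
    · calc t ^ (a-1) * Real.exp (-l*t) ≤ t ^ n * Real.exp (-l*t) := by
            rw [← h2]
            exact mul_le_mul_of_nonneg_right h1 (Real.exp_nonneg _)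
        _ ≤ ((n:ℝ)/l)^n := h4
    · omega

lemma gd_bound {a l : ℝ} (ha : 1 < a) (hl : 0 < l) :
    ∃ C, 0 < C ∧ ∀ t : ℝ, gammaDensity a l t ≤ C := by
  obtain ⟨C, hC, hCb⟩ := rpow_exp_bound ha hl
  have hG := Real.Gamma_pos_of_pos (by linarith : (0:ℝ) < a)
  refine ⟨l ^ a * C / Real.Gamma a, by positivity, fun t => ?_⟩
  unfold gammaDensity
  split_ifs with h
  · rw [mul_assoc]
    have hb : t ^ (a-1) * Real.exp (-l * t) ≤ C := hCb t h
    have hla : (0:ℝ) ≤ l ^ a := le_of_lt (Real.rpow_pos_of_pos hl a)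
    exact div_le_div_of_nonneg_right (mul_le_mul_of_nonneg_left hb hla) hG.le
  · positivity

lemma integrableOn_rpow_exp {c l : ℝ} (hc : -1 < c) (hl : 0 < l) :
    IntegrableOn (fun t : ℝ => t ^ c * Real.exp (-l * t)) (Ioi 0) := by
  have := integrableOn_rpow_mul_exp_neg_mul_rpow hc zero_lt_one hl
  refine this.congr_fun (fun x hx => ?_) measurableSet_Ioi
  simp only [Real.rpow_one]


lemma gdD_of_nonpos {a l t : ℝ} (h : t ≤ 0) : gdD a l t = 0 := if_neg (not_lt.mpr h)

lemma integrable_gd {a l : ℝ} (ha : 1 < a) (hl : 0 < l) : Integrable (gammaDensity a l) := by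
  have h0 : IntegrableOn (gammaDensity a l) (Ioi 0) := by
    have h1 : IntegrableOn (fun t : ℝ => (l ^ a / Real.Gamma a) *
        (t ^ (a-1) * Real.exp (-l * t))) (Ioi 0) :=
      (integrableOn_rpow_exp (by linarith) hl).const_mul _
    refine h1.congr_fun (fun x hx => ?_) measurableSet_Ioi
    rw [gd_of_pos hx]; ring
  have h2 : (Ioi (0:ℝ)).indicator (gammaDensity a l) = gammaDensity a l := by
    apply Set.indicator_eq_self.mpr
    intro t ht
    simp only [Function.mem_support, ne_eq] at ht
    by_contra hc
    exact ht (gd_of_nonpos (not_lt.mp (fun h => hc (Set.mem_Ioi.mpr h))))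
  rw [← h2, integrable_indicator_iff measurableSet_Ioi]
  exact h0

lemma integrable_gdD {a l : ℝ} (ha : 1 < a) (hl : 0 < l) : Integrable (gdD a l) := by
  have h0 : IntegrableOn (gdD a l) (Ioi 0) := by
    have h1 : IntegrableOn (fun t : ℝ => (l ^ a * (a-1) / Real.Gamma a) *
        (t ^ (a-2) * Real.exp (-l * t)) - (l ^ a * l / Real.Gamma a) *
        (t ^ (a-1) * Real.exp (-l * t))) (Ioi 0) :=
      ((integrableOn_rpow_exp (by linarith) hl).const_mul _).sub
        ((integrableOn_rpow_exp (by linarith) hl).const_mul _)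
    refine h1.congr_fun (fun x hx => ?_) measurableSet_Ioi
    rw [gdD_of_pos hx]; ring
  have h2 : (Ioi (0:ℝ)).indicator (gdD a l) = gdD a l := by
    apply Set.indicator_eq_self.mpr
    intro t ht
    simp only [Function.mem_support, ne_eq] at ht
    by_contra hc
    exact ht (gdD_of_nonpos (not_lt.mp (fun h => hc (Set.mem_Ioi.mpr h))))
  rw [← h2, integrable_indicator_iff measurableSet_Ioi]
  exact h0

lemma hasDerivAt_gd {a l : ℝ} (ha : 1 < a) {t : ℝ} (ht : t ≠ 0) :
    HasDerivAt (gammaDensity a l) (gdD a l t) t := by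
  rcases lt_or_gt_of_ne ht with h | h
  · have hev : (fun _ : ℝ => (0:ℝ)) =ᶠ[nhds t] gammaDensity a l := by
      filter_upwards [Iio_mem_nhds h] with s hs
      exact (gd_of_nonpos (le_of_lt hs)).symm
    have h0 : HasDerivAt (fun _ : ℝ => (0:ℝ)) 0 t := hasDerivAt_const t 0
    have h1 := h0.congr_of_eventuallyEq hev.symm
    rw [gdD_of_nonpos h.le]
    exact h1
  · have hev : (fun s : ℝ => l ^ a * s ^ (a-1) * Real.exp (-l * s) / Real.Gamma a)
        =ᶠ[nhds t] gammaDensity a l := by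
      filter_upwards [Ioi_mem_nhds h] with s hs
      exact (gd_of_pos hs).symm
    have h1 : HasDerivAt (fun s : ℝ => s ^ (a-1)) ((a-1) * t ^ (a-1-1)) t :=
      Real.hasDerivAt_rpow_const (Or.inl (ne_of_gt h))
    have h2 : HasDerivAt (fun s : ℝ => Real.exp (-l * s)) (Real.exp (-l * t) * (-l)) t := by
      simpa using (((hasDerivAt_id t).const_mul (-l)).exp)
    have h3 := ((h1.const_mul (l ^ a)).mul h2).div_const (Real.Gamma a)
    have h4 := h3.congr_of_eventuallyEq hev.symm
    refine h4.congr_deriv ?_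
    rw [gdD_of_pos h, show a-1-1 = a-2 by ring]
    ring

lemma gdD_factor {a l t : ℝ} (ht : 0 < t) :
    gdD a l t = l ^ a * t ^ (a-2) * ((a-1) - l * t) * Real.exp (-l * t) / Real.Gamma a := by
  rw [gdD_of_pos ht]
  have : t ^ (a-1) = t ^ (a-2) * t := by
    rw [← Real.rpow_add_one (ne_of_gt ht) (a-2), show a-2+1 = a-1 by ring]
  rw [this]; ring

lemma gdD_nonneg {a l t : ℝ} (ha : 1 < a) (hl : 0 < l) (ht : t ≤ (a-1)/l) : 0 ≤ gdD a l t := by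
  rcases le_or_gt t 0 with h | h
  · rw [gdD_of_nonpos h]
  · rw [gdD_factor h]
    have hG := Real.Gamma_pos_of_pos (by linarith : (0:ℝ) < a)
    have h2 : 0 ≤ (a-1) - l * t := by
      rw [le_div_iff₀ hl] at ht; linarith
    positivity

lemma gdD_pos {a l t : ℝ} (ha : 1 < a) (hl : 0 < l) (ht0 : 0 < t) (ht : t < (a-1)/l) :
    0 < gdD a l t := by
  rw [gdD_factor ht0]
  have hG := Real.Gamma_pos_of_pos (by linarith : (0:ℝ) < a)
  have h2 : 0 < (a-1) - l * t := by
    rw [lt_div_iff₀ hl] at ht; linarith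
  positivity

lemma gdD_nonpos {a l t : ℝ} (ha : 1 < a) (hl : 0 < l) (ht : (a-1)/l ≤ t) : gdD a l t ≤ 0 := by
  have ht0 : 0 < t := lt_of_lt_of_le (div_pos (by linarith) hl) ht
  rw [gdD_factor ht0]
  have hG := Real.Gamma_pos_of_pos (by linarith : (0:ℝ) < a)
  have h2 : (a-1) - l * t ≤ 0 := by
    rw [div_le_iff₀ hl] at ht; linarith
  have hpos : (0:ℝ) < l ^ a * t ^ (a-2) * Real.exp (-l*t) := by positivity
  have heq : l ^ a * t ^ (a-2) * ((a-1) - l*t) * Real.exp (-l*t)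
      = (l ^ a * t ^ (a-2) * Real.exp (-l*t)) * ((a-1) - l*t) := by ring
  rw [heq]
  exact div_nonpos_of_nonpos_of_nonneg (mul_nonpos_of_nonneg_of_nonpos hpos.le h2) hG.le

lemma gdD_neg {a l t : ℝ} (ha : 1 < a) (hl : 0 < l) (ht : (a-1)/l < t) : gdD a l t < 0 := by
  have ht0 : 0 < t := lt_trans (div_pos (by linarith) hl) ht
  rw [gdD_factor ht0]
  have hG := Real.Gamma_pos_of_pos (by linarith : (0:ℝ) < a)
  have h2 : (a-1) - l * t < 0 := by
    rw [div_lt_iff₀ hl] at ht; linarith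
  have hpos : (0:ℝ) < l ^ a * t ^ (a-2) * Real.exp (-l*t) := by positivity
  have heq : l ^ a * t ^ (a-2) * ((a-1) - l*t) * Real.exp (-l*t)
      = (l ^ a * t ^ (a-2) * Real.exp (-l*t)) * ((a-1) - l*t) := by ring
  rw [heq]
  exact div_neg_of_neg_of_pos (mul_neg_of_pos_of_neg hpos h2) hG


lemma four_point {a l : ℝ} (ha : 1 < a) (hl : 0 < l) {p q p' q' : ℝ}
    (hsum : p + q = p' + q') (h1 : p' ≤ p) (h2 : p' ≤ q) :
    gammaDensity a l p' * gammaDensity a l q' ≤ gammaDensity a l p * gammaDensity a l q := by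
  rcases le_or_gt p' 0 with h0 | h0
  · rw [gd_of_nonpos h0, zero_mul]
    exact mul_nonneg (gd_nonneg (by linarith) hl) (gd_nonneg (by linarith) hl)
  · have hp : 0 < p := lt_of_lt_of_le h0 h1
    have hq : 0 < q := lt_of_lt_of_le h0 h2
    have hq' : 0 < q' := by nlinarith
    rw [gd_of_pos h0, gd_of_pos hq', gd_of_pos hp, gd_of_pos hq]
    have hG := Real.Gamma_pos_of_pos (by linarith : (0:ℝ) < a)
    have key : p' ^ (a-1) * q' ^ (a-1) ≤ p ^ (a-1) * q ^ (a-1) := by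
      rw [← Real.mul_rpow h0.le hq'.le, ← Real.mul_rpow hp.le hq.le]
      refine Real.rpow_le_rpow (by positivity) ?_ (by linarith)
      nlinarith [mul_nonneg (sub_nonneg.mpr h1) (sub_nonneg.mpr h2)]
    have e1 : Real.exp (-l*p') * Real.exp (-l*q') = Real.exp (-l*(p+q)) := by
      rw [← Real.exp_add]; congr 1; rw [hsum]; ring
    have e2 : Real.exp (-l*p) * Real.exp (-l*q) = Real.exp (-l*(p+q)) := by
      rw [← Real.exp_add]; congr 1; ring
    calc l ^ a * p' ^ (a-1) * Real.exp (-l * p') / Real.Gamma a *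
          (l ^ a * q' ^ (a-1) * Real.exp (-l * q') / Real.Gamma a)
        = (l^a/Real.Gamma a)^2 * ((p'^(a-1)*q'^(a-1)) *
            (Real.exp (-l*p') * Real.exp (-l*q'))) := by ring
      _ = (l^a/Real.Gamma a)^2 * ((p'^(a-1)*q'^(a-1)) * Real.exp (-l*(p+q))) := by rw [e1]
      _ ≤ (l^a/Real.Gamma a)^2 * ((p^(a-1)*q^(a-1)) * Real.exp (-l*(p+q))) := by
          refine mul_le_mul_of_nonneg_left ?_ (by positivity)
          exact mul_le_mul_of_nonneg_right key (Real.exp_nonneg _)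
      _ = (l^a/Real.Gamma a)^2 * ((p^(a-1)*q^(a-1)) *
            (Real.exp (-l*p) * Real.exp (-l*q))) := by rw [e2]
      _ = l ^ a * p ^ (a-1) * Real.exp (-l * p) / Real.Gamma a *
          (l ^ a * q ^ (a-1) * Real.exp (-l * q) / Real.Gamma a) := by ring

lemma four_point_strict {a l : ℝ} (ha : 1 < a) (hl : 0 < l) {p q p' q' : ℝ}
    (hsum : p + q = p' + q') (h0 : 0 < p') (h1 : p' < p) (h2 : p' < q) :
    gammaDensity a l p' * gammaDensity a l q' < gammaDensity a l p * gammaDensity a l q := by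
  have hp : 0 < p := lt_trans h0 h1
  have hq : 0 < q := lt_trans h0 h2
  have hq' : 0 < q' := by nlinarith
  rw [gd_of_pos h0, gd_of_pos hq', gd_of_pos hp, gd_of_pos hq]
  have hG := Real.Gamma_pos_of_pos (by linarith : (0:ℝ) < a)
  have key : p' ^ (a-1) * q' ^ (a-1) < p ^ (a-1) * q ^ (a-1) := by
    rw [← Real.mul_rpow h0.le hq'.le, ← Real.mul_rpow hp.le hq.le]
    refine Real.rpow_lt_rpow (by positivity) ?_ (by linarith)
    nlinarith [mul_pos (sub_pos.mpr h1) (sub_pos.mpr h2)]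
  have e1 : Real.exp (-l*p') * Real.exp (-l*q') = Real.exp (-l*(p+q)) := by
    rw [← Real.exp_add]; congr 1; rw [hsum]; ring
  have e2 : Real.exp (-l*p) * Real.exp (-l*q) = Real.exp (-l*(p+q)) := by
    rw [← Real.exp_add]; congr 1; ring
  calc l ^ a * p' ^ (a-1) * Real.exp (-l * p') / Real.Gamma a *
        (l ^ a * q' ^ (a-1) * Real.exp (-l * q') / Real.Gamma a)
      = (l^a/Real.Gamma a)^2 * ((p'^(a-1)*q'^(a-1)) *
          (Real.exp (-l*p') * Real.exp (-l*q'))) := by ring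
    _ = (l^a/Real.Gamma a)^2 * ((p'^(a-1)*q'^(a-1)) * Real.exp (-l*(p+q))) := by rw [e1]
    _ < (l^a/Real.Gamma a)^2 * ((p^(a-1)*q^(a-1)) * Real.exp (-l*(p+q))) := by
        refine mul_lt_mul_of_pos_left ?_ (by positivity)
        exact mul_lt_mul_of_pos_right key (Real.exp_pos _)
    _ = (l^a/Real.Gamma a)^2 * ((p^(a-1)*q^(a-1)) *
          (Real.exp (-l*p) * Real.exp (-l*q))) := by rw [e2]
    _ = l ^ a * p ^ (a-1) * Real.exp (-l * p) / Real.Gamma a *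
        (l ^ a * q ^ (a-1) * Real.exp (-l * q) / Real.Gamma a) := by ring


variable {a₁ l₁ a₂ l₂ : ℝ}

noncomputable def conv (a₁ l₁ a₂ l₂ x : ℝ) : ℝ :=
  ∫ t, gammaDensity a₁ l₁ t * gammaDensity a₂ l₂ (t - x)

noncomputable def convD (a₁ l₁ a₂ l₂ x : ℝ) : ℝ :=
  ∫ t, gdD a₁ l₁ t * gammaDensity a₂ l₂ (t - x)

lemma integrable_convD_integrand (ha₁ : 1 < a₁) (hl₁ : 0 < l₁) (ha₂ : 1 < a₂) (hl₂ : 0 < l₂)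
    (x : ℝ) : Integrable (fun t => gdD a₁ l₁ t * gammaDensity a₂ l₂ (t - x)) := by
  obtain ⟨C, hC, hCb⟩ := gd_bound ha₂ hl₂
  refine Integrable.mono' (((integrable_gdD ha₁ hl₁).abs).const_mul C) ?_ ?_
  · exact (measurable_gdD.mul (measurable_gd.comp (measurable_id.sub measurable_const))).aestronglyMeasurable
  · refine ae_of_all _ fun t => ?_
    rw [Real.norm_eq_abs, abs_mul]
    have h2 : |gammaDensity a₂ l₂ (t - x)| ≤ C := by
      rw [abs_of_nonneg (gd_nonneg (by linarith) hl₂)]; exact hCb _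
    calc |gdD a₁ l₁ t| * |gammaDensity a₂ l₂ (t - x)| ≤ |gdD a₁ l₁ t| * C :=
        mul_le_mul_of_nonneg_left h2 (abs_nonneg _)
      _ = C * |gdD a₁ l₁ t| := mul_comm _ _

lemma integrable_conv_integrand (ha₁ : 1 < a₁) (hl₁ : 0 < l₁) (ha₂ : 1 < a₂) (hl₂ : 0 < l₂)
    (x : ℝ) : Integrable (fun t => gammaDensity a₁ l₁ t * gammaDensity a₂ l₂ (t - x)) := by
  obtain ⟨C, hC, hCb⟩ := gd_bound ha₂ hl₂
  refine Integrable.mono' (((integrable_gd ha₁ hl₁).abs).const_mul C) ?_ ?_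
  · exact (measurable_gd.mul (measurable_gd.comp (measurable_id.sub measurable_const))).aestronglyMeasurable
  · refine ae_of_all _ fun t => ?_
    rw [Real.norm_eq_abs, abs_mul]
    have h2 : |gammaDensity a₂ l₂ (t - x)| ≤ C := by
      rw [abs_of_nonneg (gd_nonneg (by linarith) hl₂)]; exact hCb _
    calc |gammaDensity a₁ l₁ t| * |gammaDensity a₂ l₂ (t - x)| ≤ |gammaDensity a₁ l₁ t| * C :=
        mul_le_mul_of_nonneg_left h2 (abs_nonneg _)
      _ = C * |gammaDensity a₁ l₁ t| := mul_comm _ _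

lemma conv_eq_shift (x : ℝ) :
    conv a₁ l₁ a₂ l₂ x = ∫ y, gammaDensity a₁ l₁ (x + y) * gammaDensity a₂ l₂ y := by
  unfold conv
  rw [← integral_add_right_eq_self (fun t => gammaDensity a₁ l₁ t * gammaDensity a₂ l₂ (t - x)) x]
  congr 1
  funext y
  rw [add_sub_cancel_right, add_comm]

lemma convD_eq_shift (x : ℝ) :
    convD a₁ l₁ a₂ l₂ x = ∫ y, gdD a₁ l₁ (x + y) * gammaDensity a₂ l₂ y := by
  unfold convD
  rw [← integral_add_right_eq_self (fun t => gdD a₁ l₁ t * gammaDensity a₂ l₂ (t - x)) x]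
  congr 1
  funext y
  rw [add_sub_cancel_right, add_comm]

lemma conv_swap (x : ℝ) : conv a₁ l₁ a₂ l₂ x = conv a₂ l₂ a₁ l₁ (-x) := by
  rw [conv_eq_shift]
  unfold conv
  congr 1
  funext y
  rw [sub_neg_eq_add, mul_comm, add_comm]

end BG

namespace BG

lemma bgd_eq_conv (ap lp am lm : ℝ) :
    bilateralGammaDensity ap lp am lm = conv ap lp am lm := by
  funext x
  rw [conv_eq_shift]
  unfold bilateralGammaDensity
  exact setIntegral_eq_integral_of_forall_compl_eq_zero fun y hy => by
    rw [gd_of_nonpos (not_lt.mp (fun h => hy (Set.mem_Ioi.mpr h))), mul_zero]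


lemma ftc_one_bad {f f' : ℝ → ℝ} {p : ℝ} (hf : Continuous f)
    (hd : ∀ t, t ≠ p → HasDerivAt f (f' t) t)
    (hi : ∀ a b : ℝ, IntervalIntegrable f' volume a b) :
    ∀ a b : ℝ, a ≤ b → ∫ s in a..b, f' s = f b - f a := by
  have piece : ∀ u v : ℝ, u ≤ v → p ∉ Ioo u v → ∫ s in u..v, f' s = f v - f u := by
    intro u v huv hp
    refine intervalIntegral.integral_eq_sub_of_hasDeriv_right_of_le huv hf.continuousOn
      (fun x hx => ?_) (hi u v)
    exact (hd x (fun h => hp (h ▸ hx))).hasDerivWithinAt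
  intro a b hab
  by_cases hp : p ∈ Ioo a b
  · have h1 := piece a p hp.1.le (fun h => absurd h.2 (lt_irrefl p))
    have h2 := piece p b hp.2.le (fun h => absurd h.1 (lt_irrefl p))
    rw [← intervalIntegral.integral_add_adjacent_intervals (hi a p) (hi p b), h1, h2]
    ring
  · exact piece a b hab hp

lemma gd_shift_ftc {a l : ℝ} (ha : 1 < a) (hl : 0 < l) (y : ℝ) {u v : ℝ} (huv : u ≤ v) :
    ∫ s in Ioc u v, gdD a l (s + y) =
      gammaDensity a l (v + y) - gammaDensity a l (u + y) := by
  have hint : ∀ c d : ℝ, IntervalIntegrable (fun s => gdD a l (s + y)) volume c d :=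
    fun c d => ((integrable_gdD ha hl).comp_add_right y).intervalIntegrable
  have hder : ∀ t : ℝ, t ≠ -y → HasDerivAt (fun s => gammaDensity a l (s + y))
      (gdD a l (t + y)) t := by
    intro t ht
    have h1 : t + y ≠ 0 := fun h => ht (by linarith [h])
    have h2 := (hasDerivAt_gd (l := l) ha h1).comp t ((hasDerivAt_id t).add_const y)
    simpa [Function.comp_def] using h2
  have := ftc_one_bad ((continuous_gd ha).comp (continuous_id.add continuous_const))
    hder hint u v huv
  rw [intervalIntegral.integral_of_le huv] at this
  exact this

lemma continuous_convD (ha₁ : 1 < a₁) (hl₁ : 0 < l₁) (ha₂ : 1 < a₂) (hl₂ : 0 < l₂) :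
    Continuous (convD a₁ l₁ a₂ l₂) := by
  obtain ⟨C, hC, hCb⟩ := gd_bound ha₂ hl₂
  unfold convD
  apply continuous_of_dominated (bound := fun t => C * |gdD a₁ l₁ t|)
  · intro x
    exact (measurable_gdD.mul
      (measurable_gd.comp (measurable_id.sub measurable_const))).aestronglyMeasurable
  · intro x
    refine ae_of_all _ fun t => ?_
    rw [Real.norm_eq_abs, abs_mul]
    have h2 : |gammaDensity a₂ l₂ (t - x)| ≤ C := by
      rw [abs_of_nonneg (gd_nonneg (by linarith) hl₂)]; exact hCb _
    calc |gdD a₁ l₁ t| * |gammaDensity a₂ l₂ (t - x)| ≤ |gdD a₁ l₁ t| * C :=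
        mul_le_mul_of_nonneg_left h2 (abs_nonneg _)
      _ = C * |gdD a₁ l₁ t| := mul_comm _ _
  · exact (integrable_gdD ha₁ hl₁).abs.const_mul C
  · refine ae_of_all _ fun t => ?_
    exact continuous_const.mul ((continuous_gd ha₂).comp (continuous_const.sub continuous_id))


lemma integrable_shift_conv (ha₁ : 1 < a₁) (hl₁ : 0 < l₁) (ha₂ : 1 < a₂) (hl₂ : 0 < l₂)
    (v : ℝ) : Integrable (fun y => gammaDensity a₁ l₁ (v + y) * gammaDensity a₂ l₂ y) := by
  have h := (integrable_conv_integrand ha₁ hl₁ ha₂ hl₂ v).comp_add_right v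
  refine h.congr (ae_of_all _ fun y => ?_)
  simp only [add_sub_cancel_right]
  rw [add_comm]

lemma key_ftc (ha₁ : 1 < a₁) (hl₁ : 0 < l₁) (ha₂ : 1 < a₂) (hl₂ : 0 < l₂)
    {u v : ℝ} (huv : u ≤ v) :
    conv a₁ l₁ a₂ l₂ v - conv a₁ l₁ a₂ l₂ u = ∫ s in Ioc u v, convD a₁ l₁ a₂ l₂ s := by
  have hM : Integrable (fun t => |gdD a₁ l₁ t|) := (integrable_gdD ha₁ hl₁).abs
  set M := ∫ t, |gdD a₁ l₁ t| with hMdef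
  have hAESM : AEStronglyMeasurable
      (Function.uncurry fun y s => gdD a₁ l₁ (s + y) * gammaDensity a₂ l₂ y)
      ((volume : Measure ℝ).prod (volume.restrict (Ioc u v))) := by
    apply Measurable.aestronglyMeasurable
    exact (measurable_gdD.comp (measurable_snd.add measurable_fst)).mul
      (measurable_gd.comp measurable_fst)
  have hInt : Integrable (Function.uncurry fun y s => gdD a₁ l₁ (s + y) * gammaDensity a₂ l₂ y)
      ((volume : Measure ℝ).prod (volume.restrict (Ioc u v))) := by
    rw [integrable_prod_iff hAESM]
    constructor
    · refine ae_of_all _ fun y => ?_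
      exact ((((integrable_gdD ha₁ hl₁).comp_add_right y).mul_const
        (gammaDensity a₂ l₂ y)).restrict)
    · have hb : ∀ y : ℝ, (∫ s in Ioc u v, ‖gdD a₁ l₁ (s + y) * gammaDensity a₂ l₂ y‖)
          ≤ M * gammaDensity a₂ l₂ y := by
        intro y
        have e1 : ∀ s : ℝ, ‖gdD a₁ l₁ (s + y) * gammaDensity a₂ l₂ y‖
            = |gdD a₁ l₁ (s + y)| * gammaDensity a₂ l₂ y := by
          intro s
          rw [Real.norm_eq_abs, abs_mul, abs_of_nonneg (gd_nonneg (by linarith) hl₂)]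
        simp_rw [e1]
        rw [MeasureTheory.integral_mul_const]
        have e2 : (∫ s in Ioc u v, |gdD a₁ l₁ (s + y)|) ≤ M := by
          have h3 : (∫ s in Ioc u v, |gdD a₁ l₁ (s + y)|) ≤ ∫ s, |gdD a₁ l₁ (s + y)| :=
            setIntegral_le_integral ((hM.comp_add_right y))
              (ae_of_all _ fun s => abs_nonneg _)
          have e3 : (∫ s, |gdD a₁ l₁ (s + y)|) = M :=
            integral_add_right_eq_self (fun t => |gdD a₁ l₁ t|) y
          exact le_trans h3 (le_of_eq e3)
        exact mul_le_mul_of_nonneg_right e2 (gd_nonneg (by linarith) hl₂)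
      refine Integrable.mono' ((integrable_gd ha₂ hl₂).const_mul M) ?_ ?_
      · exact hAESM.norm.integral_prod_right'
      · refine ae_of_all _ fun y => ?_
        rw [Real.norm_eq_abs, abs_of_nonneg (integral_nonneg fun s => norm_nonneg _)]
        exact hb y
  have step1 : ∀ y : ℝ, gammaDensity a₁ l₁ (v + y) * gammaDensity a₂ l₂ y -
      gammaDensity a₁ l₁ (u + y) * gammaDensity a₂ l₂ y
      = ∫ s in Ioc u v, gdD a₁ l₁ (s + y) * gammaDensity a₂ l₂ y := by
    intro y
    rw [MeasureTheory.integral_mul_const, gd_shift_ftc ha₁ hl₁ y huv, sub_mul]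
  rw [conv_eq_shift, conv_eq_shift,
    ← integral_sub (integrable_shift_conv ha₁ hl₁ ha₂ hl₂ v)
      (integrable_shift_conv ha₁ hl₁ ha₂ hl₂ u)]
  have h2 : (∫ y, (gammaDensity a₁ l₁ (v + y) * gammaDensity a₂ l₂ y -
      gammaDensity a₁ l₁ (u + y) * gammaDensity a₂ l₂ y))
      = ∫ y, ∫ s in Ioc u v, gdD a₁ l₁ (s + y) * gammaDensity a₂ l₂ y := by
    congr 1
    funext y
    exact step1 y
  rw [h2, MeasureTheory.integral_integral_swap hInt]
  congr 1
  funext s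
  rw [← convD_eq_shift]

lemma hasDerivAt_conv (ha₁ : 1 < a₁) (hl₁ : 0 < l₁) (ha₂ : 1 < a₂) (hl₂ : 0 < l₂) (x : ℝ) :
    HasDerivAt (conv a₁ l₁ a₂ l₂) (convD a₁ l₁ a₂ l₂ x) x := by
  have hcont := continuous_convD ha₁ hl₁ ha₂ hl₂
  have key := fun u v (huv : u ≤ v) => key_ftc ha₁ hl₁ ha₂ hl₂ (u := u) (v := v) huv
  have h2 : conv a₁ l₁ a₂ l₂ = fun z => conv a₁ l₁ a₂ l₂ 0 + ∫ s in (0:ℝ)..z, convD a₁ l₁ a₂ l₂ s := by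
    funext z
    rcases le_total 0 z with h | h
    · rw [intervalIntegral.integral_of_le h, ← key 0 z h]; ring
    · rw [intervalIntegral.integral_symm, intervalIntegral.integral_of_le h, ← key z 0 h]; ring
  have h3 : HasDerivAt (fun z => conv a₁ l₁ a₂ l₂ 0 + ∫ s in (0:ℝ)..z, convD a₁ l₁ a₂ l₂ s)
      (convD a₁ l₁ a₂ l₂ x) x := by
    refine HasDerivAt.const_add _ ?_
    refine intervalIntegral.integral_hasDerivAt_right (hcont.intervalIntegrable _ _) ?_
      hcont.continuousAt
    exact hcont.stronglyMeasurable.stronglyMeasurableAtFilter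
  rw [h2]
  exact h3


lemma setIntegral_lt {f g : ℝ → ℝ} {s : Set ℝ} (hs : MeasurableSet s)
    (hf : IntegrableOn f s) (hg : IntegrableOn g s)
    (hle : ∀ x ∈ s, f x ≤ g x) {u : Set ℝ} (hus : u ⊆ s)
    (hu : MeasurableSet u) (hupos : 0 < volume u) (hlt : ∀ x ∈ u, f x < g x) :
    (∫ x in s, f x) < ∫ x in s, g x := by
  have h1 : 0 < ∫ x in s, (fun x => g x - f x) x := by
    refine (setIntegral_pos_iff_support_of_nonneg_ae ?_ (hg.sub hf)).mpr ?_
    · refine (ae_restrict_iff' hs).mpr (ae_of_all _ fun x hx => ?_)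
      exact sub_nonneg.mpr (hle x hx)
    · refine lt_of_lt_of_le hupos (measure_mono fun x hx => ?_)
      exact ⟨sub_ne_zero.mpr (ne_of_gt (hlt x hx)), hus hx⟩
  simp only [] at h1
  rw [integral_sub hg hf] at h1
  linarith

lemma convD_neg_right (ha₁ : 1 < a₁) (hl₁ : 0 < l₁) (ha₂ : 1 < a₂) (hl₂ : 0 < l₂)
    {x : ℝ} (hx : (a₁ - 1) / l₁ ≤ x) : convD a₁ l₁ a₂ l₂ x < 0 := by
  have hc₁ : 0 < (a₁ - 1) / l₁ := div_pos (by linarith) hl₁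
  have h := setIntegral_lt (f := fun t => gdD a₁ l₁ t * gammaDensity a₂ l₂ (t - x))
    (g := fun _ => (0:ℝ)) MeasurableSet.univ
    ((integrable_convD_integrand ha₁ hl₁ ha₂ hl₂ x).integrableOn)
    ((integrableOn_const_iff (by simp)).mpr (Or.inl (by simp))) ?_ (subset_univ (Ioi x)) measurableSet_Ioi ?_ ?_
  · rw [setIntegral_univ, setIntegral_univ, integral_zero] at h
    unfold convD
    exact h
  · intro t _
    show gdD a₁ l₁ t * gammaDensity a₂ l₂ (t - x) ≤ 0
    rcases le_or_gt t x with h | h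
    · rw [gd_of_nonpos (by linarith : t - x ≤ 0), mul_zero]
    · exact le_of_lt (mul_neg_of_neg_of_pos (gdD_neg ha₁ hl₁ (lt_of_le_of_lt hx h))
        (gd_pos (by linarith) hl₂ (by linarith)))
  · rw [Real.volume_Ioi]; exact ENNReal.zero_lt_top
  · intro t ht
    show gdD a₁ l₁ t * gammaDensity a₂ l₂ (t - x) < 0
    have ht' : x < t := ht
    exact mul_neg_of_neg_of_pos (gdD_neg ha₁ hl₁ (lt_of_le_of_lt hx ht'))
      (gd_pos (by linarith) hl₂ (by linarith))


noncomputable def Ppart (a₁ l₁ a₂ l₂ x : ℝ) : ℝ :=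
  ∫ t in Iio ((a₁-1)/l₁), gdD a₁ l₁ t * gammaDensity a₂ l₂ (t - x)

noncomputable def Npart (a₁ l₁ a₂ l₂ x : ℝ) : ℝ :=
  ∫ t in Ici ((a₁-1)/l₁), -(gdD a₁ l₁ t) * gammaDensity a₂ l₂ (t - x)

lemma integrable_Nintegrand (ha₁ : 1 < a₁) (hl₁ : 0 < l₁) (ha₂ : 1 < a₂) (hl₂ : 0 < l₂)
    (x : ℝ) : Integrable (fun t => -(gdD a₁ l₁ t) * gammaDensity a₂ l₂ (t - x)) := by
  have h := (integrable_convD_integrand ha₁ hl₁ ha₂ hl₂ x).neg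
  exact h.congr (ae_of_all _ fun t => by simp only [Pi.neg_apply]; ring)

lemma convD_split (ha₁ : 1 < a₁) (hl₁ : 0 < l₁) (ha₂ : 1 < a₂) (hl₂ : 0 < l₂) (x : ℝ) :
    convD a₁ l₁ a₂ l₂ x = Ppart a₁ l₁ a₂ l₂ x - Npart a₁ l₁ a₂ l₂ x := by
  have hi := integrable_convD_integrand ha₁ hl₁ ha₂ hl₂ x
  have h1 := intervalIntegral.integral_Iio_add_Ici (b := (a₁-1)/l₁) hi.integrableOn hi.integrableOn
  unfold convD Ppart Npart
  rw [← h1]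
  have h2 : ∫ t in Ici ((a₁-1)/l₁), -(gdD a₁ l₁ t) * gammaDensity a₂ l₂ (t - x)
      = - ∫ t in Ici ((a₁-1)/l₁), gdD a₁ l₁ t * gammaDensity a₂ l₂ (t - x) := by
    rw [← integral_neg]
    congr 1
    funext t
    ring
  rw [h2]
  ring

lemma Ppart_nonneg (ha₁ : 1 < a₁) (hl₁ : 0 < l₁) (ha₂ : 1 < a₂) (hl₂ : 0 < l₂) (x : ℝ) :
    0 ≤ Ppart a₁ l₁ a₂ l₂ x :=
  setIntegral_nonneg measurableSet_Iio fun t ht =>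
    mul_nonneg (gdD_nonneg ha₁ hl₁ (le_of_lt ht)) (gd_nonneg (by linarith) hl₂)

lemma Ppart_eq_zero (ha₁ : 1 < a₁) (hl₁ : 0 < l₁) {x : ℝ} (hge : (a₁-1)/l₁ ≤ x) :
    Ppart a₁ l₁ a₂ l₂ x = 0 := by
  unfold Ppart
  apply setIntegral_eq_zero_of_forall_eq_zero
  intro t ht
  rw [gd_of_nonpos (by simp only [mem_Iio] at ht; linarith : t - x ≤ 0), mul_zero]

lemma Npart_pos (ha₁ : 1 < a₁) (hl₁ : 0 < l₁) (ha₂ : 1 < a₂) (hl₂ : 0 < l₂) (x : ℝ) :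
    0 < Npart a₁ l₁ a₂ l₂ x := by
  set c := (a₁-1)/l₁ with hc
  have hi := (integrable_Nintegrand ha₁ hl₁ ha₂ hl₂ x).integrableOn (s := Ici c)
  refine (setIntegral_pos_iff_support_of_nonneg_ae ?_ hi).mpr ?_
  · refine (ae_restrict_iff' measurableSet_Ici).mpr (ae_of_all _ fun t ht => ?_)
    exact mul_nonneg (neg_nonneg.mpr (gdD_nonpos ha₁ hl₁ ht)) (gd_nonneg (by linarith) hl₂)
  · refine lt_of_lt_of_le ?_ (measure_mono (?_ : Ioi (max c x) ⊆ _))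
    · rw [Real.volume_Ioi]; exact ENNReal.zero_lt_top
    · intro t ht
      simp only [mem_Ioi, max_lt_iff] at ht
      constructor
      · exact ne_of_gt (mul_pos (neg_pos.mpr (gdD_neg ha₁ hl₁ ht.1))
          (gd_pos (by linarith) hl₂ (by linarith [ht.2])))
      · exact le_of_lt ht.1

lemma Npart_mono (ha₁ : 1 < a₁) (hl₁ : 0 < l₁) (ha₂ : 1 < a₂) (hl₂ : 0 < l₂)
    {x1 x2 t : ℝ} (hx : x1 ≤ x2) (ht : t < (a₁-1)/l₁) :
    gammaDensity a₂ l₂ (t - x2) * Npart a₁ l₁ a₂ l₂ x1 ≤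
      gammaDensity a₂ l₂ (t - x1) * Npart a₁ l₁ a₂ l₂ x2 := by
  unfold Npart
  rw [← integral_const_mul, ← integral_const_mul]
  refine setIntegral_mono_on
    (((integrable_Nintegrand ha₁ hl₁ ha₂ hl₂ x1).integrableOn).const_mul _)
    (((integrable_Nintegrand ha₁ hl₁ ha₂ hl₂ x2).integrableOn).const_mul _)
    measurableSet_Ici fun t' ht' => ?_
  have ht'' : t ≤ t' := le_trans ht.le ht'
  have h4 := four_point ha₂ hl₂ (p := t - x1) (q := t' - x2) (p' := t - x2) (q' := t' - x1)
    (by ring) (by linarith) (by linarith)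
  have h5 : 0 ≤ -(gdD a₁ l₁ t') := neg_nonneg.mpr (gdD_nonpos ha₁ hl₁ ht')
  calc gammaDensity a₂ l₂ (t - x2) * (-(gdD a₁ l₁ t') * gammaDensity a₂ l₂ (t' - x1))
      = -(gdD a₁ l₁ t') * (gammaDensity a₂ l₂ (t - x2) * gammaDensity a₂ l₂ (t' - x1)) := by
        ring
    _ ≤ -(gdD a₁ l₁ t') * (gammaDensity a₂ l₂ (t - x1) * gammaDensity a₂ l₂ (t' - x2)) :=
        mul_le_mul_of_nonneg_left h4 h5
    _ = gammaDensity a₂ l₂ (t - x1) * (-(gdD a₁ l₁ t') * gammaDensity a₂ l₂ (t' - x2)) := by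
        ring

lemma Npart_mono_strict (ha₁ : 1 < a₁) (hl₁ : 0 < l₁) (ha₂ : 1 < a₂) (hl₂ : 0 < l₂)
    {x1 x2 t : ℝ} (hx : x1 < x2) (ht : t < (a₁-1)/l₁) (htx : x2 < t) :
    gammaDensity a₂ l₂ (t - x2) * Npart a₁ l₁ a₂ l₂ x1 <
      gammaDensity a₂ l₂ (t - x1) * Npart a₁ l₁ a₂ l₂ x2 := by
  unfold Npart
  rw [← integral_const_mul, ← integral_const_mul]
  refine setIntegral_lt measurableSet_Ici
    (((integrable_Nintegrand ha₁ hl₁ ha₂ hl₂ x1).integrableOn).const_mul _)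
    (((integrable_Nintegrand ha₁ hl₁ ha₂ hl₂ x2).integrableOn).const_mul _)
    (fun t' ht' => ?_) Ioi_subset_Ici_self measurableSet_Ioi ?_ (fun t' ht' => ?_)
  · -- non-strict on Ici
    have ht'' : t ≤ t' := le_trans ht.le ht'
    have h4 := four_point ha₂ hl₂ (p := t - x1) (q := t' - x2) (p' := t - x2) (q' := t' - x1)
      (by ring) (by linarith) (by linarith)
    have h5 : 0 ≤ -(gdD a₁ l₁ t') := neg_nonneg.mpr (gdD_nonpos ha₁ hl₁ ht')
    calc gammaDensity a₂ l₂ (t - x2) * (-(gdD a₁ l₁ t') * gammaDensity a₂ l₂ (t' - x1))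
        = -(gdD a₁ l₁ t') * (gammaDensity a₂ l₂ (t - x2) * gammaDensity a₂ l₂ (t' - x1)) := by
          ring
      _ ≤ -(gdD a₁ l₁ t') * (gammaDensity a₂ l₂ (t - x1) * gammaDensity a₂ l₂ (t' - x2)) :=
          mul_le_mul_of_nonneg_left h4 h5
      _ = gammaDensity a₂ l₂ (t - x1) * (-(gdD a₁ l₁ t') * gammaDensity a₂ l₂ (t' - x2)) := by
          ring
  · rw [Real.volume_Ioi]; exact ENNReal.zero_lt_top
  · -- strict on Ioi c
    have ht2 : t < t' := lt_trans ht ht'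
    have h4 := four_point_strict ha₂ hl₂ (p := t - x1) (q := t' - x2) (p' := t - x2)
      (q' := t' - x1) (by ring) (by linarith) (by linarith) (by linarith)
    have h5 : 0 < -(gdD a₁ l₁ t') := neg_pos.mpr (gdD_neg ha₁ hl₁ ht')
    calc gammaDensity a₂ l₂ (t - x2) * (-(gdD a₁ l₁ t') * gammaDensity a₂ l₂ (t' - x1))
        = -(gdD a₁ l₁ t') * (gammaDensity a₂ l₂ (t - x2) * gammaDensity a₂ l₂ (t' - x1)) := by
          ring
      _ < -(gdD a₁ l₁ t') * (gammaDensity a₂ l₂ (t - x1) * gammaDensity a₂ l₂ (t' - x2)) :=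
          mul_lt_mul_of_pos_left h4 h5
      _ = gammaDensity a₂ l₂ (t - x1) * (-(gdD a₁ l₁ t') * gammaDensity a₂ l₂ (t' - x2)) := by
          ring


lemma convD_cross (ha₁ : 1 < a₁) (hl₁ : 0 < l₁) (ha₂ : 1 < a₂) (hl₂ : 0 < l₂)
    {x1 x2 : ℝ} (h12 : x1 < x2) (h1 : convD a₁ l₁ a₂ l₂ x1 ≤ 0) :
    convD a₁ l₁ a₂ l₂ x2 < 0 := by
  have hc0 : 0 < (a₁-1)/l₁ := div_pos (by linarith) hl₁
  have hs1 := convD_split ha₁ hl₁ ha₂ hl₂ x1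
  have hs2 := convD_split ha₁ hl₁ ha₂ hl₂ x2
  have hN1 := Npart_pos ha₁ hl₁ ha₂ hl₂ x1
  have hN2 := Npart_pos ha₁ hl₁ ha₂ hl₂ x2
  have hP1le : Ppart a₁ l₁ a₂ l₂ x1 ≤ Npart a₁ l₁ a₂ l₂ x1 := by
    rw [hs1] at h1; linarith
  by_contra hcon
  push_neg at hcon
  have hNP2 : Npart a₁ l₁ a₂ l₂ x2 ≤ Ppart a₁ l₁ a₂ l₂ x2 := by
    rw [hs2] at hcon; linarith
  have hP2pos : 0 < Ppart a₁ l₁ a₂ l₂ x2 := lt_of_lt_of_le hN2 hNP2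
  have hx2c : x2 < (a₁-1)/l₁ := by
    by_contra hge
    push_neg at hge
    rw [Ppart_eq_zero ha₁ hl₁ hge] at hP2pos
    exact lt_irrefl 0 hP2pos
  have hcomp : Ppart a₁ l₁ a₂ l₂ x2 * Npart a₁ l₁ a₂ l₂ x1 <
      Ppart a₁ l₁ a₂ l₂ x1 * Npart a₁ l₁ a₂ l₂ x2 := by
    have e1 : Ppart a₁ l₁ a₂ l₂ x2 * Npart a₁ l₁ a₂ l₂ x1 = ∫ t in Iio ((a₁-1)/l₁),
        gdD a₁ l₁ t * gammaDensity a₂ l₂ (t - x2) * Npart a₁ l₁ a₂ l₂ x1 := by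
      unfold Ppart
      rw [MeasureTheory.integral_mul_const]
    have e2 : Ppart a₁ l₁ a₂ l₂ x1 * Npart a₁ l₁ a₂ l₂ x2 = ∫ t in Iio ((a₁-1)/l₁),
        gdD a₁ l₁ t * gammaDensity a₂ l₂ (t - x1) * Npart a₁ l₁ a₂ l₂ x2 := by
      unfold Ppart
      rw [MeasureTheory.integral_mul_const]
    rw [e1, e2]
    refine setIntegral_lt measurableSet_Iio
      (((integrable_convD_integrand ha₁ hl₁ ha₂ hl₂ x2).mul_const _).integrableOn)
      (((integrable_convD_integrand ha₁ hl₁ ha₂ hl₂ x1).mul_const _).integrableOn)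
      (fun t ht => ?_) (?_ : Ioo (max x2 0) ((a₁-1)/l₁) ⊆ _) measurableSet_Ioo ?_
      (fun t ht => ?_)
    · have htc : t < (a₁-1)/l₁ := ht
      have hg : 0 ≤ gdD a₁ l₁ t := gdD_nonneg ha₁ hl₁ htc.le
      calc gdD a₁ l₁ t * gammaDensity a₂ l₂ (t - x2) * Npart a₁ l₁ a₂ l₂ x1
          = gdD a₁ l₁ t * (gammaDensity a₂ l₂ (t - x2) * Npart a₁ l₁ a₂ l₂ x1) := by ring
        _ ≤ gdD a₁ l₁ t * (gammaDensity a₂ l₂ (t - x1) * Npart a₁ l₁ a₂ l₂ x2) :=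
            mul_le_mul_of_nonneg_left (Npart_mono ha₁ hl₁ ha₂ hl₂ h12.le htc) hg
        _ = gdD a₁ l₁ t * gammaDensity a₂ l₂ (t - x1) * Npart a₁ l₁ a₂ l₂ x2 := by ring
    · intro t ht
      exact ht.2
    · rw [Real.volume_Ioo]
      exact ENNReal.ofReal_pos.mpr (by simp only [sub_pos]; exact max_lt hx2c hc0)
    · obtain ⟨ht1, ht2⟩ := ht
      simp only [max_lt_iff] at ht1
      have hg : 0 < gdD a₁ l₁ t := gdD_pos ha₁ hl₁ ht1.2 ht2
      calc gdD a₁ l₁ t * gammaDensity a₂ l₂ (t - x2) * Npart a₁ l₁ a₂ l₂ x1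
          = gdD a₁ l₁ t * (gammaDensity a₂ l₂ (t - x2) * Npart a₁ l₁ a₂ l₂ x1) := by ring
        _ < gdD a₁ l₁ t * (gammaDensity a₂ l₂ (t - x1) * Npart a₁ l₁ a₂ l₂ x2) :=
            mul_lt_mul_of_pos_left (Npart_mono_strict ha₁ hl₁ ha₂ hl₂ h12 ht2 ht1.1) hg
        _ = gdD a₁ l₁ t * gammaDensity a₂ l₂ (t - x1) * Npart a₁ l₁ a₂ l₂ x2 := by ring
  nlinarith [mul_le_mul_of_nonneg_right hP1le hN2.le, mul_le_mul_of_nonneg_left hNP2 hN1.le]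


lemma convD_swap (ha₁ : 1 < a₁) (hl₁ : 0 < l₁) (ha₂ : 1 < a₂) (hl₂ : 0 < l₂) (x : ℝ) :
    convD a₁ l₁ a₂ l₂ x = -(convD a₂ l₂ a₁ l₁ (-x)) := by
  have h2 : HasDerivAt (fun z : ℝ => conv a₂ l₂ a₁ l₁ (-z)) (-(convD a₂ l₂ a₁ l₁ (-x))) x := by
    have h3 := (hasDerivAt_conv ha₂ hl₂ ha₁ hl₁ (-x)).comp x (hasDerivAt_neg x)
    simpa [Function.comp_def] using h3
  have hfun : conv a₁ l₁ a₂ l₂ = fun z => conv a₂ l₂ a₁ l₁ (-z) := funext fun z => conv_swap z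
  have hA := hasDerivAt_conv ha₁ hl₁ ha₂ hl₂ x
  rw [hfun] at hA
  exact hA.unique h2

lemma convD_pos_left (ha₁ : 1 < a₁) (hl₁ : 0 < l₁) (ha₂ : 1 < a₂) (hl₂ : 0 < l₂)
    {x : ℝ} (hx : x ≤ -((a₂-1)/l₂)) : 0 < convD a₁ l₁ a₂ l₂ x := by
  rw [convD_swap ha₁ hl₁ ha₂ hl₂ x]
  have h := convD_neg_right ha₂ hl₂ ha₁ hl₁ (x := -x) (by linarith)
  linarith


lemma convD_zero (ha₁ : 1 < a₁) (hl₁ : 0 < l₁) (ha₂ : 1 < a₂) (hl₂ : 0 < l₂) :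
    ∃ C : ℝ, 0 < C ∧
      convD a₁ l₁ a₂ l₂ 0 = C * (l₂ * a₁ - l₁ * a₂ - (l₂ - l₁)) := by
  have hμ : 0 < l₁ + l₂ := by linarith
  have hs1 : (0:ℝ) < a₁ + a₂ - 2 := by linarith
  have hG1 := Real.Gamma_pos_of_pos (by linarith : (0:ℝ) < a₁)
  have hG2 := Real.Gamma_pos_of_pos (by linarith : (0:ℝ) < a₂)
  have hGs := Real.Gamma_pos_of_pos hs1
  set K := l₁ ^ a₁ * l₂ ^ a₂ / (Real.Gamma a₁ * Real.Gamma a₂) with hK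
  have hKpos : 0 < K := by
    have := Real.rpow_pos_of_pos hl₁ a₁
    have := Real.rpow_pos_of_pos hl₂ a₂
    positivity
  have e0 : convD a₁ l₁ a₂ l₂ 0 = ∫ t in Ioi (0:ℝ), gdD a₁ l₁ t * gammaDensity a₂ l₂ t := by
    unfold convD
    rw [← setIntegral_eq_integral_of_forall_compl_eq_zero
      (fun t ht => by
        rw [gdD_of_nonpos (not_lt.mp (fun h => ht (Set.mem_Ioi.mpr h))), zero_mul])]
    congr 1
    funext t
    rw [sub_zero]
  have e2 : ∀ t ∈ Ioi (0:ℝ), gdD a₁ l₁ t * gammaDensity a₂ l₂ t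
      = K * (a₁-1) * (t ^ ((a₁+a₂-2) - 1) * Real.exp (-((l₁+l₂) * t)))
        - K * l₁ * (t ^ ((a₁+a₂-1) - 1) * Real.exp (-((l₁+l₂) * t))) := by
    intro t ht
    have ht0 : (0:ℝ) < t := ht
    rw [gdD_of_pos ht0, gd_of_pos ht0]
    have r1 : t ^ ((a₁+a₂-2) - 1) = t ^ (a₁-2) * t ^ (a₂-1) := by
      rw [← Real.rpow_add ht0]; congr 1; ring
    have r2 : t ^ ((a₁+a₂-1) - 1) = t ^ (a₁-1) * t ^ (a₂-1) := by
      rw [← Real.rpow_add ht0]; congr 1; ring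
    have r3 : Real.exp (-((l₁+l₂) * t)) = Real.exp (-l₁*t) * Real.exp (-l₂*t) := by
      rw [← Real.exp_add]; congr 1; ring
    rw [r1, r2, r3, hK]
    field_simp
  have i1 : IntegrableOn (fun t : ℝ => t ^ ((a₁+a₂-2) - 1) * Real.exp (-((l₁+l₂) * t)))
      (Ioi 0) := by
    have := integrableOn_rpow_exp (c := (a₁+a₂-2) - 1) (l := l₁+l₂) (by linarith) hμ
    refine this.congr_fun (fun t _ => ?_) measurableSet_Ioi
    simp only [neg_mul]
  have i2 : IntegrableOn (fun t : ℝ => t ^ ((a₁+a₂-1) - 1) * Real.exp (-((l₁+l₂) * t)))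
      (Ioi 0) := by
    have := integrableOn_rpow_exp (c := (a₁+a₂-1) - 1) (l := l₁+l₂) (by linarith) hμ
    refine this.congr_fun (fun t _ => ?_) measurableSet_Ioi
    simp only [neg_mul]
  have e3 : convD a₁ l₁ a₂ l₂ 0
      = K * (a₁-1) * ((1/(l₁+l₂)) ^ (a₁+a₂-2) * Real.Gamma (a₁+a₂-2))
        - K * l₁ * ((1/(l₁+l₂)) ^ (a₁+a₂-1) * Real.Gamma (a₁+a₂-1)) := by
    rw [e0, setIntegral_congr_fun measurableSet_Ioi e2]
    rw [integral_sub ((i1.const_mul _)) ((i2.const_mul _))]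
    rw [integral_const_mul, integral_const_mul,
      Real.integral_rpow_mul_exp_neg_mul_Ioi hs1 hμ,
      Real.integral_rpow_mul_exp_neg_mul_Ioi (by linarith : (0:ℝ) < a₁+a₂-1) hμ]
  have hGrec : Real.Gamma (a₁+a₂-1) = (a₁+a₂-2) * Real.Gamma (a₁+a₂-2) := by
    have := Real.Gamma_add_one (ne_of_gt hs1)
    rw [show a₁+a₂-2+1 = a₁+a₂-1 by ring] at this
    exact this
  have hpow : (1/(l₁+l₂)) ^ (a₁+a₂-2) = (1/(l₁+l₂)) ^ (a₁+a₂-1) * (l₁+l₂) := by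
    have h1 : (0:ℝ) < 1/(l₁+l₂) := by positivity
    rw [show a₁+a₂-2 = (a₁+a₂-1) + (-1) by ring, Real.rpow_add h1, Real.rpow_neg_one]
    field_simp
  refine ⟨K * (1/(l₁+l₂)) ^ (a₁+a₂-1) * Real.Gamma (a₁+a₂-2), by positivity, ?_⟩
  rw [e3, hGrec, hpow]
  ring
end BG

/-- If `α⁺ > 1` and `α⁻ > 1`, then the mode `x₀` of the bilateral Gamma density lies in
`(-(α⁻-1)/λ⁻, (α⁺-1)/λ⁺)`, and its sign is determined by the sign of
`λ⁻α⁺ - λ⁺α⁻ - (λ⁻ - λ⁺)`. -/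
theorem bilateralGammaDensity_mode_location (ap lp am lm : ℝ)
    (hap : 0 < ap) (hlp : 0 < lp) (ham : 0 < am) (hlm : 0 < lm)
    (hap1 : 1 < ap) (ham1 : 1 < am) :
    ∃ x₀ ∈ Ioo (-((am - 1) / lm)) ((ap - 1) / lp),
      (StrictMonoOn (bilateralGammaDensity ap lp am lm) (Iio x₀) ∧
        StrictAntiOn (bilateralGammaDensity ap lp am lm) (Ioi x₀)) ∧
      (x₀ = 0 ↔ lm * ap - lp * am = lm - lp) ∧
      (0 < x₀ ↔ lm - lp < lm * ap - lp * am) ∧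
      (x₀ < 0 ↔ lm * ap - lp * am < lm - lp) := by
  classical
  set D := BG.convD ap lp am lm with hDdef
  set F := bilateralGammaDensity ap lp am lm with hFdef
  have hF : ∀ x, HasDerivAt F (D x) x := by
    intro x
    rw [hFdef, BG.bgd_eq_conv]
    exact BG.hasDerivAt_conv hap1 hlp ham1 hlm x
  have hcont : Continuous D := BG.continuous_convD hap1 hlp ham1 hlm
  have hneg : ∀ x, (ap-1)/lp ≤ x → D x < 0 := fun x hx =>
    BG.convD_neg_right hap1 hlp ham1 hlm hx
  have hpos : ∀ x, x ≤ -((am-1)/lm) → 0 < D x := fun x hx =>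
    BG.convD_pos_left hap1 hlp ham1 hlm hx
  have hcross : ∀ {x1 x2 : ℝ}, x1 < x2 → D x1 ≤ 0 → D x2 < 0 := fun h12 h1 =>
    BG.convD_cross hap1 hlp ham1 hlm h12 h1
  obtain ⟨C, hC, hC0⟩ := BG.convD_zero hap1 hlp ham1 hlm
  rw [← hDdef] at hC0
  set S := {x : ℝ | 0 ≤ D x} with hS
  have hSmem : -((am-1)/lm) ∈ S := (hpos _ le_rfl).le
  have hSne : S.Nonempty := ⟨_, hSmem⟩
  have hSub : ∀ x ∈ S, x ≤ (ap-1)/lp := by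
    intro x hx
    by_contra hgt
    push_neg at hgt
    exact absurd (hcross hgt (hneg _ le_rfl).le) (not_lt.mpr hx)
  have hSbdd : BddAbove S := ⟨(ap-1)/lp, hSub⟩
  set x₀ := sSup S with hx₀def
  have hx₀ub : x₀ ≤ (ap-1)/lp := csSup_le hSne hSub
  have hx₀lb : -((am-1)/lm) ≤ x₀ := le_csSup hSbdd hSmem
  have hDposlt : ∀ x, x < x₀ → 0 < D x := by
    intro x hx
    obtain ⟨z, hzS, hxz⟩ := exists_lt_of_lt_csSup hSne hx
    by_contra h
    push_neg at h
    exact absurd (hcross hxz h) (not_lt.mpr hzS)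
  have hDneg : ∀ x, x₀ < x → D x < 0 := by
    intro x hx
    by_contra h
    push_neg at h
    exact absurd (le_csSup hSbdd (h : x ∈ S)) (not_le.mpr hx)
  have hD₀ : D x₀ = 0 := by
    apply le_antisymm
    · have ht : Tendsto D (nhdsWithin x₀ (Ioi x₀)) (nhds (D x₀)) :=
        (hcont.continuousAt).continuousWithinAt
      refine le_of_tendsto ht ?_
      refine eventually_nhdsWithin_of_forall fun x hx => (hDneg x hx).le
    · have ht : Tendsto D (nhdsWithin x₀ (Iio x₀)) (nhds (D x₀)) :=
        (hcont.continuousAt).continuousWithinAt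
      refine ge_of_tendsto ht ?_
      refine eventually_nhdsWithin_of_forall fun x hx => (hDposlt x hx).le
  have hx₀mem : x₀ ∈ Ioo (-((am - 1) / lm)) ((ap - 1) / lp) := by
    constructor
    · rcases eq_or_lt_of_le hx₀lb with h | h
      · exfalso
        have := hpos x₀ (le_of_eq h.symm)
        rw [hD₀] at this
        exact lt_irrefl 0 this
      · exact h
    · rcases eq_or_lt_of_le hx₀ub with h | h
      · exfalso
        have := hneg x₀ (le_of_eq h.symm)
        rw [hD₀] at this
        exact lt_irrefl 0 this
      · exact h
  have hmono : StrictMonoOn F (Iio x₀) := by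
    refine strictMonoOn_of_deriv_pos (convex_Iio _) ?_ ?_
    · exact fun x _ => (hF x).continuousAt.continuousWithinAt
    · intro x hx
      rw [interior_Iio] at hx
      rw [(hF x).deriv]
      exact hDposlt x hx
  have hanti : StrictAntiOn F (Ioi x₀) := by
    refine strictAntiOn_of_deriv_neg (convex_Ioi _) ?_ ?_
    · exact fun x _ => (hF x).continuousAt.continuousWithinAt
    · intro x hx
      rw [interior_Ioi] at hx
      rw [(hF x).deriv]
      exact hDneg x hx
  have himp1 : x₀ = 0 → lm * ap - lp * am = lm - lp := by
    intro h
    rw [h] at hD₀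
    rw [hD₀] at hC0  -- 0 = C * expr
    have : lm * ap - lp * am - (lm - lp) = 0 := by
      rcases mul_eq_zero.mp hC0.symm with h' | h'
      · exact absurd h' (ne_of_gt hC)
      · exact h'
    linarith
  have himp2 : 0 < x₀ → lm - lp < lm * ap - lp * am := by
    intro h
    have h0 : 0 < D 0 := hDposlt 0 h
    rw [hC0] at h0
    nlinarith
  have himp3 : x₀ < 0 → lm * ap - lp * am < lm - lp := by
    intro h
    have h0 : D 0 < 0 := hDneg 0 h
    rw [hC0] at h0
    nlinarith
  refine ⟨x₀, hx₀mem, ⟨hmono, hanti⟩, ?_, ?_, ?_⟩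
  · constructor
    · exact himp1
    · intro h
      rcases lt_trichotomy x₀ 0 with h' | h' | h'
      · linarith [himp3 h']
      · exact h'
      · linarith [himp2 h']
  · constructor
    · exact himp2
    · intro h
      rcases lt_trichotomy x₀ 0 with h' | h' | h'
      · linarith [himp3 h']
      · linarith [himp1 h']
      · exact h'
  · constructor
    · exact himp3
    · intro h
      rcases lt_trichotomy x₀ 0 with h' | h' | h'
      · exact h'
      · linarith [himp1 h']
      · linarith [himp2 h']
end

section
/- Let α⁺, λ⁺, α⁻, λ⁻ > 0 with α⁺ > 1 and α⁻ > 1. Then the bilateral Gamma density f is differentiable at 0 and its derivative there satisfies f′(0) = [(λ⁺)^{α⁺} (λ⁻)^{α⁻} / (λ⁺ + λ⁻)^{α⁺ + α⁻ − 2}] · [Γ(α⁺ + α⁻ − 2)/(Γ(α⁺ − 1) Γ(α⁻))] · [1 − (λ⁺/(λ⁺ + λ⁻)) · ((α⁺ + α⁻ − 2)/(α⁺ − 1))]. -/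
open MeasureTheory Filter Set Topology

namespace BilGammaAux

/-- The derivative of the Gamma density on `(0, ∞)`. -/
noncomputable def gd' (a l y : ℝ) : ℝ :=
  l ^ a / Real.Gamma a * (((a - 1) * y ^ (a - 2) - l * y ^ (a - 1)) * Real.exp (-(l * y)))

lemma integrableOn_rpow_exp {b l : ℝ} (hb : -1 < b) (hl : 0 < l) :
    IntegrableOn (fun y : ℝ => y ^ b * Real.exp (-(l * y))) (Ioi 0) := by
  have h := integrableOn_rpow_mul_exp_neg_mul_rpow hb (zero_lt_one : (0:ℝ) < 1) hl
  refine h.congr_fun (fun y _ => ?_) measurableSet_Ioi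
  beta_reduce
  rw [Real.rpow_one, neg_mul]

lemma gammaDensity_eq (a l : ℝ) (ha : 1 < a) :
    gammaDensity a l = fun t => max t 0 ^ (a - 1) * (l ^ a * Real.exp (-l * t) / Real.Gamma a) := by
  funext t
  unfold gammaDensity
  split_ifs with h
  · rw [max_eq_left h.le]; ring
  · rw [max_eq_right (not_lt.mp h), Real.zero_rpow (by linarith), zero_mul]

lemma continuous_gammaDensity {a l : ℝ} (ha : 1 < a) : Continuous (gammaDensity a l) := by
  rw [gammaDensity_eq a l ha]
  apply Continuous.mul
  · rw [continuous_iff_continuousAt]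
    intro t
    exact (Real.continuousAt_rpow_const _ _ (Or.inr (by linarith))).comp
      ((continuous_id.max continuous_const).continuousAt)
  · fun_prop

lemma gammaDensity_nonneg {a l : ℝ} (ha : 0 < a) (hl : 0 < l) (t : ℝ) :
    0 ≤ gammaDensity a l t := by
  unfold gammaDensity
  split_ifs with h
  · have hΓ := Real.Gamma_pos_of_pos ha
    positivity
  · exact le_refl 0

lemma gammaDensity_le {a l : ℝ} (ha : 1 < a) (hl : 0 < l) (t : ℝ) :
    gammaDensity a l t
      ≤ l ^ a / Real.Gamma a * (((a - 1) / l) ^ (a - 1) * Real.exp (-(a - 1))) := by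
  have hΓ := Real.Gamma_pos_of_pos (by linarith : (0:ℝ) < a)
  unfold gammaDensity
  split_ifs with h
  · have key : t ^ (a - 1) * Real.exp (-l * t)
        ≤ ((a - 1) / l) ^ (a - 1) * Real.exp (-(a - 1)) := by
      have h2 : (0:ℝ) ≤ l * t / (a - 1) := div_nonneg (by positivity) (by linarith)
      have h3 : l * t / (a - 1) ≤ Real.exp (l * t / (a - 1) - 1) := by
        have := Real.add_one_le_exp (l * t / (a - 1) - 1)
        linarith
      have h4 : (l * t / (a - 1)) ^ (a - 1) ≤ Real.exp (l * t / (a - 1) - 1) ^ (a - 1) :=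
        Real.rpow_le_rpow h2 h3 (by linarith)
      have h5 : Real.exp (l * t / (a - 1) - 1) ^ (a - 1) = Real.exp (l * t - (a - 1)) := by
        rw [← Real.exp_mul]
        congr 1
        rw [sub_mul, div_mul_cancel₀ _ (show a - 1 ≠ 0 by linarith), one_mul]
      have h6 : (l * t / (a - 1)) ^ (a - 1) ≤ Real.exp (l * t - (a - 1)) := h5 ▸ h4
      have hx : (a - 1) / l * (l * t / (a - 1)) = t := by
        field_simp [hl.ne', show a - 1 ≠ 0 by linarith]
      have h1 : t ^ (a - 1) = ((a - 1) / l) ^ (a - 1) * (l * t / (a - 1)) ^ (a - 1) := by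
        rw [← Real.mul_rpow (div_nonneg (by linarith) hl.le) h2, hx]
      calc t ^ (a - 1) * Real.exp (-l * t)
          = ((a - 1) / l) ^ (a - 1) * ((l * t / (a - 1)) ^ (a - 1) * Real.exp (-l * t)) := by
            rw [h1]; ring
        _ ≤ ((a - 1) / l) ^ (a - 1) * (Real.exp (l * t - (a - 1)) * Real.exp (-l * t)) :=
            mul_le_mul_of_nonneg_left
              (mul_le_mul_of_nonneg_right h6 (Real.exp_pos _).le)
              (Real.rpow_nonneg (div_nonneg (by linarith) hl.le) _)
        _ = ((a - 1) / l) ^ (a - 1) * Real.exp (-(a - 1)) := by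
            rw [← Real.exp_add]
            congr 2
            ring
    have hrw : l ^ a * t ^ (a - 1) * Real.exp (-l * t) / Real.Gamma a
        = l ^ a / Real.Gamma a * (t ^ (a - 1) * Real.exp (-l * t)) := by ring
    rw [hrw]
    exact mul_le_mul_of_nonneg_left key (by positivity)
  · exact mul_nonneg (by positivity)
      (mul_nonneg (Real.rpow_nonneg (div_nonneg (by linarith) hl.le) _) (Real.exp_pos _).le)

lemma hasDerivAt_gammaDensity {a l : ℝ} (ha : 1 < a) {y : ℝ} (hy : 0 < y) :
    HasDerivAt (gammaDensity a l) (gd' a l y) y := by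
  have h1 : HasDerivAt (fun t : ℝ => t ^ (a - 1)) ((a - 1) * y ^ (a - 2)) y := by
    have := Real.hasDerivAt_rpow_const (x := y) (p := a - 1) (Or.inl hy.ne')
    rwa [show a - 1 - 1 = a - 2 by ring] at this
  have h2 : HasDerivAt (fun t : ℝ => Real.exp (-l * t)) (Real.exp (-l * y) * (-l)) y := by
    have hlin : HasDerivAt (fun t : ℝ => -l * t) (-l) y := by
      simpa using (hasDerivAt_id y).const_mul (-l)
    exact hlin.exp
  have h3 := (h1.mul h2).const_mul (l ^ a / Real.Gamma a)
  have heq : l ^ a / Real.Gamma a * ((a - 1) * y ^ (a - 2) * Real.exp (-l * y)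
      + y ^ (a - 1) * (Real.exp (-l * y) * (-l))) = gd' a l y := by
    unfold gd'
    rw [show -(l * y) = -l * y by ring]
    ring
  rw [heq] at h3
  apply h3.congr_of_eventuallyEq
  filter_upwards [Ioi_mem_nhds hy] with t ht
  simp only [gammaDensity, if_pos (mem_Ioi.mp ht), Pi.mul_apply]
  ring

lemma integrableOn_gd' {a l : ℝ} (ha : 1 < a) (hl : 0 < l) :
    IntegrableOn (gd' a l) (Ioi 0) := by
  have h1 := (integrableOn_rpow_exp (show (-1:ℝ) < a - 2 by linarith) hl).const_mul
      (l ^ a / Real.Gamma a * (a - 1))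
  have h2 := (integrableOn_rpow_exp (show (-1:ℝ) < a - 1 by linarith) hl).const_mul
      (l ^ a / Real.Gamma a * l)
  refine IntegrableOn.congr_fun (h1.sub h2) (fun y _ => ?_) measurableSet_Ioi
  simp only [Pi.sub_apply]
  unfold gd'
  ring

end BilGammaAux

open BilGammaAux

/-- For `α⁺, α⁻ > 1`, the bilateral Gamma density is differentiable at `0` with the
stated value of `f'(0)`. -/
theorem bilateralGammaDensity_deriv_at_zero (ap lp am lm : ℝ)
    (hap : 0 < ap) (hlp : 0 < lp) (ham : 0 < am) (hlm : 0 < lm)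
    (hap1 : 1 < ap) (ham1 : 1 < am) :
    HasDerivAt (bilateralGammaDensity ap lp am lm)
      (lp ^ ap * lm ^ am / (lp + lm) ^ (ap + am - 2)
        * (Real.Gamma (ap + am - 2) / (Real.Gamma (ap - 1) * Real.Gamma am))
        * (1 - lp / (lp + lm) * ((ap + am - 2) / (ap - 1)))) 0 := by
  have hL : 0 < lp + lm := by linarith
  have contp := continuous_gammaDensity (a := ap) (l := lp) hap1
  have contm := continuous_gammaDensity (a := am) (l := lm) ham1
  -- integrability of the densities
  have intm : IntegrableOn (gammaDensity am lm) (Ioi 0) := by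
    have := (integrableOn_rpow_exp (show (-1:ℝ) < am - 1 by linarith) hlm).const_mul
      (lm ^ am / Real.Gamma am)
    refine IntegrableOn.congr_fun this (fun y hy => ?_) measurableSet_Ioi
    simp only [gammaDensity, if_pos (mem_Ioi.mp hy)]
    rw [show -(lm * y) = -lm * y by ring]
    ring
  have intp : IntegrableOn (gammaDensity ap lp) (Ioi 0) := by
    have := (integrableOn_rpow_exp (show (-1:ℝ) < ap - 1 by linarith) hlp).const_mul
      (lp ^ ap / Real.Gamma ap)
    refine IntegrableOn.congr_fun this (fun y hy => ?_) measurableSet_Ioi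
    simp only [gammaDensity, if_pos (mem_Ioi.mp hy)]
    rw [show -(lp * y) = -lp * y by ring]
    ring
  have intgd := integrableOn_gd' (a := am) (l := lm) ham1 hlm
  -- the antiderivative `G`
  set G : ℝ → ℝ := fun t => ∫ s in (0:ℝ)..t, gammaDensity ap lp s with hGdef
  have hG : ∀ t, HasDerivAt G (gammaDensity ap lp t) t := by
    intro t
    exact intervalIntegral.integral_hasDerivAt_right (contp.intervalIntegrable 0 t)
      ⟨univ, univ_mem, contp.aestronglyMeasurable.restrict⟩ contp.continuousAt
  have hGc : Continuous G := by
    rw [continuous_iff_continuousAt]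
    exact fun t => (hG t).continuousAt
  set C₀ : ℝ := ∫ y in Ioi (0:ℝ), gammaDensity ap lp y with hC₀def
  have hC₀nonneg : 0 ≤ C₀ :=
    setIntegral_nonneg measurableSet_Ioi fun y _ => gammaDensity_nonneg hap hlp y
  have hGbd : ∀ t, |G t| ≤ C₀ := by
    intro t
    rcases le_or_gt t 0 with ht | ht
    · have hzero : G t = 0 := by
        rw [hGdef]
        simp only
        rw [intervalIntegral.integral_symm, intervalIntegral.integral_of_le ht]
        rw [setIntegral_eq_zero_of_forall_eq_zero]
        · simp
        · intro y hy
          simp only [gammaDensity, if_neg (not_lt.mpr hy.2)]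
      rw [hzero, abs_zero]
      exact hC₀nonneg
    · have h0 : G t = ∫ y in Ioc (0:ℝ) t, gammaDensity ap lp y := by
        rw [hGdef]
        simp only
        rw [intervalIntegral.integral_of_le ht.le]
      have hnn : 0 ≤ G t := by
        rw [h0]
        exact setIntegral_nonneg measurableSet_Ioc fun y _ => gammaDensity_nonneg hap hlp y
      rw [abs_of_nonneg hnn, h0, hC₀def]
      exact setIntegral_mono_set intp
        (Eventually.of_forall fun y => gammaDensity_nonneg hap hlp y)
        (HasSubset.Subset.eventuallyLE Ioc_subset_Ioi_self)
  set Mp : ℝ := lp ^ ap / Real.Gamma ap * (((ap - 1) / lp) ^ (ap - 1) * Real.exp (-(ap - 1)))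
    with hMpdef
  -- integrability of the two products, for every shift x
  have huv' : ∀ x : ℝ, IntegrableOn (fun y => G (x + y) * gd' am lm y) (Ioi 0) := by
    intro x
    refine Integrable.bdd_mul (c := C₀) intgd
      ((hGc.comp (continuous_const.add continuous_id)).aestronglyMeasurable.restrict)
      (Eventually.of_forall fun y => ?_)
    rw [Real.norm_eq_abs]
    exact hGbd _
  have hu'v : ∀ x : ℝ,
      IntegrableOn (fun y => gammaDensity ap lp (x + y) * gammaDensity am lm y) (Ioi 0) := by
    intro x
    refine Integrable.bdd_mul (c := Mp) intm
      ((contp.comp (continuous_const.add continuous_id)).aestronglyMeasurable.restrict)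
      (Eventually.of_forall fun y => ?_)
    rw [Real.norm_eq_abs, abs_of_nonneg (gammaDensity_nonneg hap hlp _)]
    exact gammaDensity_le hap1 hlp _
  -- integration by parts representation
  have repr : ∀ x : ℝ, bilateralGammaDensity ap lp am lm x
      = -∫ y in Ioi (0:ℝ), G (x + y) * gd' am lm y := by
    intro x
    have hu : ∀ y ∈ Ioi (0:ℝ),
        HasDerivAt (fun y => G (x + y)) (gammaDensity ap lp (x + y)) y := by
      intro y _
      have := (hG (x + y)).comp y ((hasDerivAt_id y).const_add x)
      simpa [Function.comp_def] using this
    have hv : ∀ y ∈ Ioi (0:ℝ), HasDerivAt (gammaDensity am lm) (gd' am lm y) y :=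
      fun y hy => hasDerivAt_gammaDensity ham1 (mem_Ioi.mp hy)
    have h_zero : Tendsto ((fun y => G (x + y)) * gammaDensity am lm) (𝓝[>] (0:ℝ)) (𝓝 0) := by
      have hc : ContinuousAt ((fun y => G (x + y)) * gammaDensity am lm) 0 :=
        ((hGc.comp (continuous_const.add continuous_id)).mul contm).continuousAt
      have hval : ((fun y => G (x + y)) * gammaDensity am lm) 0 = 0 := by
        simp [gammaDensity]
      have h0 : Tendsto ((fun y => G (x + y)) * gammaDensity am lm) (𝓝[>] (0:ℝ))
          (𝓝 (((fun y => G (x + y)) * gammaDensity am lm) 0)) :=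
        hc.tendsto.mono_left nhdsWithin_le_nhds
      rwa [hval] at h0
    have h_infty : Tendsto ((fun y => G (x + y)) * gammaDensity am lm) atTop (𝓝 0) := by
      apply squeeze_zero_norm'
        (a := fun y => C₀ * (lm ^ am / Real.Gamma am) * (y ^ (am - 1) * Real.exp (-lm * y)))
      · filter_upwards [eventually_gt_atTop (0:ℝ)] with y hy
        rw [Pi.mul_apply, norm_mul, Real.norm_eq_abs, Real.norm_eq_abs]
        calc |G (x + y)| * |gammaDensity am lm y|
            ≤ C₀ * |gammaDensity am lm y| :=
              mul_le_mul_of_nonneg_right (hGbd _) (abs_nonneg _)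
          _ = C₀ * (lm ^ am / Real.Gamma am) * (y ^ (am - 1) * Real.exp (-lm * y)) := by
              rw [abs_of_nonneg (gammaDensity_nonneg ham hlm _)]
              simp only [gammaDensity, if_pos hy]
              ring
      · have := (tendsto_rpow_mul_exp_neg_mul_atTop_nhds_zero (am - 1) lm hlm).const_mul
          (C₀ * (lm ^ am / Real.Gamma am))
        simpa using this
    have ibp := integral_Ioi_mul_deriv_eq_deriv_mul hu hv (huv' x) (hu'v x) h_zero h_infty
    unfold bilateralGammaDensity
    linarith [ibp]
  -- differentiation under the integral sign
  have key := hasDerivAt_integral_of_dominated_loc_of_deriv_le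
    (μ := volume.restrict (Ioi (0:ℝ))) (x₀ := (0:ℝ))
    (F := fun x y => G (x + y) * gd' am lm y)
    (F' := fun x y => gammaDensity ap lp (x + y) * gd' am lm y)
    (bound := fun y => Mp * ‖gd' am lm y‖) (Metric.ball_mem_nhds (0:ℝ) zero_lt_one)
    (Eventually.of_forall fun x =>
      ((hGc.comp (continuous_const.add continuous_id)).aestronglyMeasurable.restrict).mul
        intgd.aestronglyMeasurable)
    (huv' 0)
    (((contp.comp (continuous_const.add continuous_id)).aestronglyMeasurable.restrict).mul
      intgd.aestronglyMeasurable)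
    (Eventually.of_forall fun y => by
      intro x _
      rw [norm_mul]
      apply mul_le_mul_of_nonneg_right _ (norm_nonneg _)
      rw [Real.norm_eq_abs, abs_of_nonneg (gammaDensity_nonneg hap hlp _)]
      exact gammaDensity_le hap1 hlp _)
    (intgd.norm.const_mul Mp)
    (Eventually.of_forall fun y => by
      intro x _
      have := ((hG (x + y)).comp x ((hasDerivAt_id x).add_const y)).mul_const (gd' am lm y)
      simpa using this)
  have hderiv := key.2.neg
  -- compute the value of the derivative
  have hΓap1 := Real.Gamma_pos_of_pos (show (0:ℝ) < ap - 1 by linarith)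
  have hΓam := Real.Gamma_pos_of_pos ham
  have hval : -(∫ y in Ioi (0:ℝ), gammaDensity ap lp (0 + y) * gd' am lm y)
      = lp ^ ap * lm ^ am / (lp + lm) ^ (ap + am - 2)
        * (Real.Gamma (ap + am - 2) / (Real.Gamma (ap - 1) * Real.Gamma am))
        * (1 - lp / (lp + lm) * ((ap + am - 2) / (ap - 1))) := by
    have e1 : ∀ y ∈ Ioi (0:ℝ), gammaDensity ap lp (0 + y) * gd' am lm y
        = (lp ^ ap / Real.Gamma ap * (lm ^ am / Real.Gamma am) * (am - 1))
            * (y ^ (ap + am - 2 - 1) * Real.exp (-((lp + lm) * y)))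
          - (lp ^ ap / Real.Gamma ap * (lm ^ am / Real.Gamma am) * lm)
            * (y ^ (ap + am - 1 - 1) * Real.exp (-((lp + lm) * y))) := by
      intro y hy
      have hy' := mem_Ioi.mp hy
      rw [zero_add]
      simp only [gammaDensity, gd', if_pos hy']
      rw [show ap + am - 2 - 1 = (ap - 1) + (am - 2) by ring,
        show ap + am - 1 - 1 = (ap - 1) + (am - 1) by ring,
        Real.rpow_add hy', Real.rpow_add hy',
        show -((lp + lm) * y) = -lp * y + -(lm * y) by ring, Real.exp_add]
      ring
    rw [setIntegral_congr_fun measurableSet_Ioi e1]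
    have I1 := (integrableOn_rpow_exp (show (-1:ℝ) < ap + am - 2 - 1 by linarith) hL).const_mul
      (lp ^ ap / Real.Gamma ap * (lm ^ am / Real.Gamma am) * (am - 1))
    have I2 := (integrableOn_rpow_exp (show (-1:ℝ) < ap + am - 1 - 1 by linarith) hL).const_mul
      (lp ^ ap / Real.Gamma ap * (lm ^ am / Real.Gamma am) * lm)
    rw [integral_sub I1 I2, integral_const_mul, integral_const_mul,
      Real.integral_rpow_mul_exp_neg_mul_Ioi (show (0:ℝ) < ap + am - 2 by linarith) hL,
      Real.integral_rpow_mul_exp_neg_mul_Ioi (show (0:ℝ) < ap + am - 1 by linarith) hL]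
    have hΓap : Real.Gamma ap = (ap - 1) * Real.Gamma (ap - 1) := by
      have := Real.Gamma_add_one (show ap - 1 ≠ 0 by linarith)
      rwa [show ap - 1 + 1 = ap by ring] at this
    have hΓs : Real.Gamma (ap + am - 1) = (ap + am - 2) * Real.Gamma (ap + am - 2) := by
      have := Real.Gamma_add_one (show ap + am - 2 ≠ 0 by linarith)
      rwa [show ap + am - 2 + 1 = ap + am - 1 by ring] at this
    have hpow1 : (1 / (lp + lm)) ^ (ap + am - 1)
        = (1 / (lp + lm)) ^ (ap + am - 2) * (1 / (lp + lm)) := by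
      have := Real.rpow_add_one (show (1:ℝ) / (lp + lm) ≠ 0 by positivity) (ap + am - 2)
      rwa [show ap + am - 2 + 1 = ap + am - 1 by ring] at this
    have hpow2 : (1 / (lp + lm)) ^ (ap + am - 2) = ((lp + lm) ^ (ap + am - 2))⁻¹ := by
      rw [one_div, Real.inv_rpow hL.le]
    have hPpos : (0:ℝ) < (lp + lm) ^ (ap + am - 2) := Real.rpow_pos_of_pos hL _
    rw [hΓap, hΓs, hpow1, hpow2]
    have n1 : ap - 1 ≠ 0 := by linarith
    have n2 : Real.Gamma (ap - 1) ≠ 0 := ne_of_gt hΓap1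
    have n3 : Real.Gamma am ≠ 0 := ne_of_gt hΓam
    have n4 : (lp + lm) ^ (ap + am - 2) ≠ 0 := ne_of_gt hPpos
    have n5 : lp + lm ≠ 0 := ne_of_gt hL
    field_simp [n1, n2, n3, n4, n5]
    ring
  rw [← hval]
  exact hderiv.congr_of_eventuallyEq (Eventually.of_forall repr)
end

section
/- Let α⁺, λ⁺, α⁻, λ⁻ > 0 and let N be the unique nonnegative integer satisfying N < α⁺ + α⁻ ≤ N + 1. Then the N-th derivative f^{(N)} of the bilateral Gamma density converges to a finite limit as x tends to 0 from the right if and only if α⁺ is a positive integer. -/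
open MeasureTheory Filter Set Topology

section BilateralGammaAux

set_option linter.unusedVariables false

variable {ap am lm lp c x s : ℝ}

noncomputable def bgW (am lm : ℝ) (y : ℝ) : ℝ := y ^ (am - 1) * Real.exp (-(lm * y))
noncomputable def bgPhi (lp am lm s x y : ℝ) : ℝ :=
  (x + y) ^ s * Real.exp (-(lp * (x + y))) * bgW am lm y
noncomputable def bgH (lp am lm s x : ℝ) : ℝ := ∫ y in Ioi (0 : ℝ), bgPhi lp am lm s x y
noncomputable def bgC (ap lp am lm : ℝ) : ℝ :=
  lp ^ ap * lm ^ am / (Real.Gamma ap * Real.Gamma am)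
noncomputable def bgP (ap : ℝ) (j : ℕ) : ℝ := ∏ i ∈ Finset.range j, (ap - (i + 1))

/-- base integrability: `y^b e^(-l y)` on `Ioi 0`. -/
lemma bg_int_base {b l : ℝ} (hb : -1 < b) (hl : 0 < l) :
    IntegrableOn (fun y : ℝ => y ^ b * Real.exp (-(l * y))) (Ioi 0) := by
  have h := integrableOn_rpow_mul_exp_neg_mul_rpow (p := 1) (s := b) (b := l) hb one_pos hl
  refine h.congr_fun (fun y hy => ?_) measurableSet_Ioi
  dsimp only
  rw [Real.rpow_one]
  ring_nf

/-- boundedness of `(c+y)^s e^(-l y)` on `y ≥ 0`. -/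
lemma bg_bounded {c l : ℝ} (hc : 0 < c) (hl : 0 < l) (s : ℝ) :
    ∃ M : ℝ, 0 ≤ M ∧ ∀ y : ℝ, 0 ≤ y → (c + y) ^ s * Real.exp (-(l * y)) ≤ M := by
  have h0 : Tendsto (fun t : ℝ => t ^ s * Real.exp (-l * t)) atTop (𝓝 0) :=
    tendsto_rpow_mul_exp_neg_mul_atTop_nhds_zero s l hl
  have h1 : Tendsto (fun y : ℝ => (c + y) ^ s * Real.exp (-l * (c + y))) atTop (𝓝 0) :=
    h0.comp (tendsto_atTop_add_const_left _ c tendsto_id)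
  have h2 : ∀ᶠ y in atTop, (c + y) ^ s * Real.exp (-l * (c + y)) ≤ 1 := by
    filter_upwards [h1.eventually (eventually_le_nhds (by norm_num : (0:ℝ) < 1))] with y hy
      using hy
  obtain ⟨T, hT⟩ := h2.exists_forall_of_atTop
  have hcont : ContinuousOn (fun y : ℝ => (c + y) ^ s * Real.exp (-(l * y))) (Icc 0 (max T 0)) := by
    intro y hy
    have hcy : c + y ≠ 0 := by have := hy.1; positivity
    exact (((Real.continuousAt_rpow_const _ s (Or.inl hcy)).comp
      (by fun_prop)).mul (by fun_prop)).continuousWithinAt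
  obtain ⟨M₁, hM₁⟩ := (isCompact_Icc.image_of_continuousOn hcont).bddAbove
  refine ⟨max M₁ (Real.exp (l * c)), le_max_of_le_right (Real.exp_pos _).le, fun y hy => ?_⟩
  rcases le_or_gt y (max T 0) with h | h
  · exact le_max_of_le_left (hM₁ (mem_image_of_mem _ ⟨hy, h⟩))
  · have hyT : T ≤ y := le_of_lt (lt_of_le_of_lt (le_max_left _ _) h)
    have := hT y hyT
    have hrw : Real.exp (-(l * y)) = Real.exp (-l * (c + y)) * Real.exp (l * c) := by
      rw [← Real.exp_add]; ring_nf
    refine le_max_of_le_right ?_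
    rw [hrw, ← mul_assoc]
    calc (c + y) ^ s * Real.exp (-l * (c + y)) * Real.exp (l * c)
        ≤ 1 * Real.exp (l * c) := by
          exact mul_le_mul_of_nonneg_right this (Real.exp_pos _).le
      _ = Real.exp (l * c) := one_mul _


lemma bgW_nonneg {y : ℝ} (hy : 0 ≤ y) : 0 ≤ bgW am lm y := by
  unfold bgW; positivity

lemma bgW_meas (ham : 0 < am) (hlm : 0 < lm) :
    AEStronglyMeasurable (bgW am lm) (volume.restrict (Ioi (0:ℝ))) := by
  refine ContinuousOn.aestronglyMeasurable (fun y hy => ?_) measurableSet_Ioi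
  have hy0 : y ≠ 0 := ne_of_gt hy
  exact ((Real.continuousAt_rpow_const _ _ (Or.inl hy0)).mul (by fun_prop)).continuousWithinAt

/-- integrability of `(c+y)^s * bgW` for `c > 0`. -/
lemma bg_int_shift (hc : 0 < c) (ham : 0 < am) (hlm : 0 < lm) (s : ℝ) :
    IntegrableOn (fun y : ℝ => (c + y) ^ s * bgW am lm y) (Ioi 0) := by
  obtain ⟨M, hM0, hM⟩ := bg_bounded hc (half_pos hlm) s
  have hint : IntegrableOn (fun y : ℝ => M * (y ^ (am - 1) * Real.exp (-(lm / 2 * y)))) (Ioi 0) :=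
    (bg_int_base (by linarith) (half_pos hlm)).const_mul M
  refine hint.mono' ?_ ?_
  · refine ContinuousOn.aestronglyMeasurable (fun y hy => ?_) measurableSet_Ioi
    have hy0 : y ≠ 0 := ne_of_gt hy
    have hcy : c + y ≠ 0 := by have := mem_Ioi.mp hy; positivity
    exact (((Real.continuousAt_rpow_const _ s (Or.inl hcy)).comp (by fun_prop)).mul
      (((Real.continuousAt_rpow_const _ _ (Or.inl hy0)).mul (by fun_prop)))).continuousWithinAt
  · filter_upwards [ae_restrict_mem measurableSet_Ioi] with y hy
    have hy0 : (0:ℝ) < y := hy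
    have h1 : (c + y) ^ s * bgW am lm y
        = ((c + y) ^ s * Real.exp (-(lm / 2 * y))) * (y ^ (am - 1) * Real.exp (-(lm / 2 * y))) := by
      unfold bgW
      rw [show -(lm * y) = -(lm / 2 * y) + -(lm / 2 * y) by ring, Real.exp_add]
      ring
    rw [Real.norm_eq_abs, abs_of_nonneg (by unfold bgW; positivity), h1]
    have h2 : (0:ℝ) ≤ y ^ (am - 1) * Real.exp (-(lm / 2 * y)) := by positivity
    exact mul_le_mul_of_nonneg_right (hM y hy0.le) h2

lemma bgPhi_nonneg (s : ℝ) {x y : ℝ} (hy : 0 ≤ y) (hxy : 0 ≤ x + y) :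
    0 ≤ bgPhi lp am lm s x y := by
  unfold bgPhi bgW; positivity

lemma bgPhi_le (hlp : 0 < lp) (s x : ℝ) (y : ℝ) (hy : 0 < y) (hxy : 0 < x + y) :
    bgPhi lp am lm s x y ≤ (x + y) ^ s * bgW am lm y := by
  unfold bgPhi
  have h1 : Real.exp (-(lp * (x + y))) ≤ 1 := by
    rw [Real.exp_le_one_iff]; nlinarith
  have h2 : (0:ℝ) ≤ (x + y) ^ s := Real.rpow_nonneg hxy.le s
  calc (x + y) ^ s * Real.exp (-(lp * (x + y))) * bgW am lm y
      ≤ (x + y) ^ s * 1 * bgW am lm y := by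
        exact mul_le_mul_of_nonneg_right (mul_le_mul_of_nonneg_left h1 h2) (bgW_nonneg hy.le)
    _ = (x + y) ^ s * bgW am lm y := by ring

lemma bgPhi_meas (hx : 0 ≤ x) (ham : 0 < am) (hlm : 0 < lm) (s : ℝ) :
    AEStronglyMeasurable (bgPhi lp am lm s x) (volume.restrict (Ioi (0:ℝ))) := by
  refine ContinuousOn.aestronglyMeasurable (fun y hy => ?_) measurableSet_Ioi
  have hy0 : y ≠ 0 := ne_of_gt hy
  have hxy : x + y ≠ 0 := by have := mem_Ioi.mp hy; positivity
  exact ((((Real.continuousAt_rpow_const _ s (Or.inl hxy)).comp (by fun_prop)).mul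
    (by fun_prop)).mul
    ((Real.continuousAt_rpow_const _ _ (Or.inl hy0)).mul (by fun_prop))).continuousWithinAt

/-- main integrand is integrable for `x > 0`. -/
lemma bgPhi_int (hx : 0 < x) (hlp : 0 < lp) (ham : 0 < am) (hlm : 0 < lm) (s : ℝ) :
    IntegrableOn (bgPhi lp am lm s x) (Ioi 0) := by
  refine (bg_int_shift hx ham hlm s).mono' (bgPhi_meas hx.le ham hlm s) ?_
  filter_upwards [ae_restrict_mem measurableSet_Ioi] with y hy
  rw [Real.norm_eq_abs, abs_of_nonneg (bgPhi_nonneg s (le_of_lt hy) (by have : (0:ℝ) < y := hy; linarith))]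
  exact bgPhi_le hlp s x y hy (by have : (0:ℝ) < y := hy; linarith)

lemma bg_sandwich {a b c t : ℝ} (ha : 0 < a) (hab : a ≤ b) (hbc : b ≤ c) :
    b ^ t ≤ a ^ t + c ^ t := by
  rcases le_or_gt 0 t with h | h
  · have := Real.rpow_le_rpow (by linarith) hbc h
    have ha' : (0:ℝ) ≤ a ^ t := Real.rpow_nonneg ha.le t
    linarith
  · have := Real.rpow_le_rpow_of_nonpos ha hab h.le
    have hc' : (0:ℝ) ≤ c ^ t := Real.rpow_nonneg (by linarith) t
    linarith

lemma bgH_hasDerivAt (hx : 0 < x) (hlp : 0 < lp) (ham : 0 < am) (hlm : 0 < lm) (s : ℝ) :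
    HasDerivAt (bgH lp am lm s)
      (s * bgH lp am lm (s - 1) x - lp * bgH lp am lm s x) x := by
  set F' : ℝ → ℝ → ℝ := fun x' y =>
    (s * (x' + y) ^ (s - 1) * Real.exp (-(lp * (x' + y))) +
      (x' + y) ^ s * (Real.exp (-(lp * (x' + y))) * -lp)) * bgW am lm y with hF'
  set bound : ℝ → ℝ := fun y =>
    |s| * ((x / 2 + y) ^ (s - 1) * bgW am lm y) + |s| * ((x / 2 * 3 + y) ^ (s - 1) * bgW am lm y)
      + lp * ((x / 2 + y) ^ s * bgW am lm y) + lp * ((x / 2 * 3 + y) ^ s * bgW am lm y)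
    with hbound
  have hball : ∀ x' ∈ Metric.ball x (x / 2), x / 2 < x' ∧ x' ≤ x / 2 * 3 := by
    intro x' hx'
    rw [Metric.mem_ball, Real.dist_eq, abs_lt] at hx'
    constructor <;> linarith [hx'.1, hx'.2]
  have key := hasDerivAt_integral_of_dominated_loc_of_deriv_le (F := fun x' => bgPhi lp am lm s x')
    (F' := F') (x₀ := x) (s := Metric.ball x (x / 2)) (μ := volume.restrict (Ioi 0)) (bound := bound)
    (Metric.ball_mem_nhds x (half_pos hx))
    (by filter_upwards [eventually_gt_nhds (show x / 2 < x by linarith)] with x' hx'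
        exact bgPhi_meas (le_of_lt (lt_trans (half_pos hx) hx')) ham hlm s)
    (bgPhi_int hx hlp ham hlm s)
    (by -- measurability of F' x
      refine ContinuousOn.aestronglyMeasurable (fun y hy => ?_) measurableSet_Ioi
      have hy0 : y ≠ 0 := ne_of_gt hy
      have hxy : x + y ≠ 0 := by have := mem_Ioi.mp hy; positivity
      refine ContinuousAt.continuousWithinAt ?_
      have h1 : ContinuousAt (fun y : ℝ => (x + y) ^ (s - 1)) y :=
        (Real.continuousAt_rpow_const _ _ (Or.inl hxy)).comp (by fun_prop)
      have h2 : ContinuousAt (fun y : ℝ => (x + y) ^ s) y :=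
        (Real.continuousAt_rpow_const _ _ (Or.inl hxy)).comp (by fun_prop)
      have h3 : ContinuousAt (fun y : ℝ => y ^ (am - 1)) y :=
        Real.continuousAt_rpow_const _ _ (Or.inl hy0)
      have h4 : ContinuousAt (bgW am lm) y := by
        unfold bgW
        exact h3.mul (by fun_prop)
      exact (((continuousAt_const.mul h1).mul (by fun_prop)).add (h2.mul (by fun_prop))).mul h4)
    (by -- bound
      filter_upwards [ae_restrict_mem measurableSet_Ioi] with y hy x' hx'
      obtain ⟨h1, h2⟩ := hball x' hx'
      have hy0 : (0:ℝ) < y := hy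
      have hxy : (0:ℝ) < x' + y := by linarith
      have hw : 0 ≤ bgW am lm y := bgW_nonneg hy0.le
      have hP : (0:ℝ) ≤ (x' + y) ^ (s - 1) := Real.rpow_nonneg hxy.le _
      have hQ : (0:ℝ) ≤ (x' + y) ^ s := Real.rpow_nonneg hxy.le _
      have he : Real.exp (-(lp * (x' + y))) ≤ 1 := by
        rw [Real.exp_le_one_iff]; nlinarith
      have he0 : (0:ℝ) < Real.exp (-(lp * (x' + y))) := Real.exp_pos _
      have habs : |s * (x' + y) ^ (s - 1) * Real.exp (-(lp * (x' + y))) +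
          (x' + y) ^ s * (Real.exp (-(lp * (x' + y))) * -lp)|
          ≤ |s| * (x' + y) ^ (s - 1) + lp * (x' + y) ^ s := by
        rw [abs_le]
        constructor
        · nlinarith [neg_abs_le s, le_abs_self s, mul_nonneg hP he0.le, mul_nonneg hQ he0.le,
            mul_le_mul_of_nonneg_left he hP, mul_le_mul_of_nonneg_left he hQ, abs_nonneg s]
        · nlinarith [neg_abs_le s, le_abs_self s, mul_nonneg hP he0.le, mul_nonneg hQ he0.le,
            mul_le_mul_of_nonneg_left he hP, mul_le_mul_of_nonneg_left he hQ, abs_nonneg s]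
      have hsand1 : (x' + y) ^ (s - 1) ≤ (x / 2 + y) ^ (s - 1) + (x / 2 * 3 + y) ^ (s - 1) :=
        bg_sandwich (by linarith) (by linarith) (by linarith)
      have hsand2 : (x' + y) ^ s ≤ (x / 2 + y) ^ s + (x / 2 * 3 + y) ^ s :=
        bg_sandwich (by linarith) (by linarith) (by linarith)
      rw [hF', Real.norm_eq_abs, abs_mul, abs_of_nonneg hw]
      calc |s * (x' + y) ^ (s - 1) * Real.exp (-(lp * (x' + y))) +
          (x' + y) ^ s * (Real.exp (-(lp * (x' + y))) * -lp)| * bgW am lm y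
          ≤ (|s| * (x' + y) ^ (s - 1) + lp * (x' + y) ^ s) * bgW am lm y :=
            mul_le_mul_of_nonneg_right habs hw
        _ ≤ bound y := by
            rw [hbound]
            have h3 : |s| * (x' + y) ^ (s - 1) * bgW am lm y
                ≤ |s| * ((x / 2 + y) ^ (s - 1) + (x / 2 * 3 + y) ^ (s - 1)) * bgW am lm y := by
              have := mul_le_mul_of_nonneg_left hsand1 (abs_nonneg s)
              exact mul_le_mul_of_nonneg_right this hw
            have h4 : lp * (x' + y) ^ s * bgW am lm y
                ≤ lp * ((x / 2 + y) ^ s + (x / 2 * 3 + y) ^ s) * bgW am lm y := by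
              have := mul_le_mul_of_nonneg_left hsand2 hlp.le
              exact mul_le_mul_of_nonneg_right this hw
            nlinarith [h3, h4])
    (by -- bound integrable
      have i1 := (bg_int_shift (half_pos hx) ham hlm (s - 1)).const_mul |s|
      have i2 := (bg_int_shift (by linarith : (0:ℝ) < x / 2 * 3) ham hlm (s - 1)).const_mul |s|
      have i3 := (bg_int_shift (half_pos hx) ham hlm s).const_mul lp
      have i4 := (bg_int_shift (by linarith : (0:ℝ) < x / 2 * 3) ham hlm s).const_mul lp
      exact ((i1.add i2).add i3).add i4)
    (by -- differentiability
      filter_upwards [ae_restrict_mem measurableSet_Ioi] with y hy x' hx'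
      obtain ⟨h1, h2⟩ := hball x' hx'
      have hy0 : (0:ℝ) < y := hy
      have hxy : (0:ℝ) < x' + y := by linarith
      have hadd : HasDerivAt (fun u : ℝ => u + y) 1 x' := (hasDerivAt_id x').add_const y
      have hpow : HasDerivAt (fun u : ℝ => (u + y) ^ s) (s * (x' + y) ^ (s - 1)) x' := by
        have := (Real.hasDerivAt_rpow_const (x := x' + y) (p := s)
          (Or.inl (ne_of_gt hxy))).comp x' hadd
        simpa [Function.comp_def] using this
      have hexp : HasDerivAt (fun u : ℝ => Real.exp (-(lp * (u + y))))
          (Real.exp (-(lp * (x' + y))) * -lp) x' := by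
        have hlin : HasDerivAt (fun u : ℝ => -(lp * (u + y))) (-lp) x' := by
          have := (hadd.const_mul lp).neg
          simpa [Pi.neg_def] using this
        exact hlin.exp
      have := (hpow.mul hexp).mul_const (bgW am lm y)
      exact this)
  have hrepr : (∫ y in Ioi (0:ℝ), F' x y) =
      s * bgH lp am lm (s - 1) x - lp * bgH lp am lm s x := by
    have hfun : ∀ y : ℝ, F' x y =
        s * bgPhi lp am lm (s - 1) x y - lp * bgPhi lp am lm s x y := by
      intro y; rw [hF']; unfold bgPhi; ring
    rw [show (fun y => F' x y) = fun y => s * bgPhi lp am lm (s - 1) x y -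
        lp * bgPhi lp am lm s x y from funext hfun]
    rw [integral_sub ((bgPhi_int hx hlp ham hlm (s-1)).const_mul s)
      ((bgPhi_int hx hlp ham hlm s).const_mul lp), MeasureTheory.integral_const_mul,
      MeasureTheory.integral_const_mul]
    rfl
  rw [← hrepr]
  exact key.2

/-- finite limit when `s + am > 0`. -/
lemma bgH_tendsto_finite (hlp : 0 < lp) (ham : 0 < am) (hlm : 0 < lm) (hsam : 0 < s + am) :
    ∃ L : ℝ, Tendsto (bgH lp am lm s) (𝓝[>] (0:ℝ)) (𝓝 L) := by
  refine ⟨∫ y in Ioi (0:ℝ), bgPhi lp am lm s 0 y, ?_⟩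
  have hmem : Ioo (0:ℝ) 1 ∈ 𝓝[>] (0:ℝ) := Ioo_mem_nhdsGT_of_mem (by norm_num)
  refine tendsto_integral_filter_of_dominated_convergence
    (bound := fun y => y ^ s * bgW am lm y + (1 + y) ^ s * bgW am lm y) ?_ ?_ ?_ ?_
  · filter_upwards [hmem] with x' hx'
    exact bgPhi_meas (le_of_lt hx'.1) ham hlm s
  · filter_upwards [hmem] with x' hx'
    filter_upwards [ae_restrict_mem measurableSet_Ioi] with y hy
    have hy0 : (0:ℝ) < y := hy
    have hxy : (0:ℝ) < x' + y := by linarith [hx'.1]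
    rw [Real.norm_eq_abs, abs_of_nonneg (bgPhi_nonneg s hy0.le hxy.le)]
    calc bgPhi lp am lm s x' y ≤ (x' + y) ^ s * bgW am lm y := bgPhi_le hlp s x' y hy0 hxy
      _ ≤ (y ^ s + (1 + y) ^ s) * bgW am lm y := by
          refine mul_le_mul_of_nonneg_right ?_ (bgW_nonneg hy0.le)
          exact bg_sandwich hy0 (by linarith [hx'.1]) (by linarith [hx'.2])
      _ = y ^ s * bgW am lm y + (1 + y) ^ s * bgW am lm y := by ring
  · have i1 : IntegrableOn (fun y : ℝ => y ^ s * bgW am lm y) (Ioi 0) := by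
      refine (bg_int_base (b := s + am - 1) (by linarith) hlm).congr_fun (fun y hy => ?_)
        measurableSet_Ioi
      have hy0 : (0:ℝ) < y := hy
      unfold bgW
      dsimp only
      rw [show s + am - 1 = s + (am - 1) by ring, Real.rpow_add hy0]
      ring
    exact i1.add (bg_int_shift one_pos ham hlm s)
  · filter_upwards [ae_restrict_mem measurableSet_Ioi] with y hy
    have hy0 : (0:ℝ) < y := hy
    have hcont : ContinuousAt (fun x' : ℝ => bgPhi lp am lm s x' y) 0 := by
      have h1 : ContinuousAt (fun x' : ℝ => (x' + y) ^ s) 0 :=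
        (Real.continuousAt_rpow_const _ _ (Or.inl (by simpa using ne_of_gt hy0))).comp
          (by fun_prop)
      unfold bgPhi
      fun_prop
    exact hcont.tendsto.mono_left nhdsWithin_le_nhds

/-- divergence when `s < 0` and `s + am ≤ 0`. -/
lemma bgH_tendsto_atTop (hlp : 0 < lp) (ham : 0 < am) (hlm : 0 < lm)
    (hs : s < 0) (hsam : s + am ≤ 0) :
    Tendsto (bgH lp am lm s) (𝓝[>] (0:ℝ)) atTop := by
  set C : ℝ := (2:ℝ) ^ s * Real.exp (-(lp * 2)) * Real.exp (-lm) with hC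
  have hC0 : 0 < C := by positivity
  have hmem : Ioo (0:ℝ) (1/2) ∈ 𝓝[>] (0:ℝ) := Ioo_mem_nhdsGT_of_mem (by norm_num)
  have hlog : Tendsto (fun x : ℝ => C * -Real.log x) (𝓝[>] (0:ℝ)) atTop := by
    have h1 : Tendsto Real.log (𝓝[>] (0:ℝ)) atBot :=
      Real.tendsto_log_nhdsGT_zero
    exact (tendsto_neg_atBot_atTop.comp h1).const_mul_atTop hC0
  refine tendsto_atTop_mono' _ ?_ hlog
  filter_upwards [hmem] with x hx
  obtain ⟨hx0, hx12⟩ := hx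
  -- step 3 : ∫_{Ioc x 1} C / y
  have hIoc : MeasurableSet (Ioc x 1) := measurableSet_Ioc
  have hint_inv : IntegrableOn (fun y : ℝ => C * y⁻¹) (Ioc x 1) := by
    refine (ContinuousOn.integrableOn_compact isCompact_Icc ?_).mono_set Ioc_subset_Icc_self
    refine continuousOn_const.mul (continuousOn_inv₀.mono ?_)
    intro y hy
    have h1 := hy.1
    simp only [mem_compl_iff, mem_singleton_iff]
    intro h; rw [h] at h1; linarith
  have hphi_int : IntegrableOn (bgPhi lp am lm s x) (Ioc x 1) :=
    (bgPhi_int hx0 hlp ham hlm s).mono_set (fun y hy => lt_trans hx0 hy.1)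
  have step2 : (∫ y in Ioc x 1, C * y⁻¹) ≤ ∫ y in Ioc x 1, bgPhi lp am lm s x y := by
    refine setIntegral_mono_on hint_inv hphi_int hIoc (fun y hy => ?_)
    obtain ⟨hxy, hy1⟩ := hy
    have hy0 : (0:ℝ) < y := lt_trans hx0 hxy
    have hxy0 : (0:ℝ) < x + y := by linarith
    have h2y : x + y ≤ 2 * y := by linarith
    have e1 : (2 * y) ^ s ≤ (x + y) ^ s := Real.rpow_le_rpow_of_nonpos hxy0 h2y hs.le
    have e2 : Real.exp (-(lp * 2)) ≤ Real.exp (-(lp * (x + y))) := by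
      rw [Real.exp_le_exp]
      nlinarith
    have e3 : Real.exp (-lm) ≤ Real.exp (-(lm * y)) := by
      rw [Real.exp_le_exp]
      nlinarith
    have e4 : (2 * y) ^ s = 2 ^ s * y ^ s := Real.mul_rpow (by norm_num) hy0.le
    have e5 : y ^ s * y ^ (am - 1) = y ^ (s + am - 1) := by
      rw [← Real.rpow_add hy0]; ring_nf
    have e6 : y ^ (-1 : ℝ) ≤ y ^ (s + am - 1) :=
      Real.rpow_le_rpow_of_exponent_ge hy0 hy1 (by linarith)
    have e7 : y ^ (-1 : ℝ) = y⁻¹ := Real.rpow_neg_one y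
    have hys : (0:ℝ) ≤ y ^ s := Real.rpow_nonneg hy0.le s
    have hpow2 : (0:ℝ) < (2:ℝ) ^ s := Real.rpow_pos_of_pos (by norm_num) s
    have hyam : (0:ℝ) ≤ y ^ (am - 1) := Real.rpow_nonneg hy0.le _
    unfold bgPhi bgW
    calc C * y⁻¹ = 2 ^ s * (y ^ (-1:ℝ)) * Real.exp (-(lp * 2)) * Real.exp (-lm) := by
          rw [e7, hC]; ring
      _ ≤ 2 ^ s * (y ^ (s + am - 1)) * Real.exp (-(lp * 2)) * Real.exp (-lm) := by
          have := mul_le_mul_of_nonneg_left e6 hpow2.le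
          have h' := mul_le_mul_of_nonneg_right this (Real.exp_pos (-(lp*2))).le
          exact mul_le_mul_of_nonneg_right h' (Real.exp_pos (-lm)).le
      _ = (2 ^ s * y ^ s) * Real.exp (-(lp * 2)) * (y ^ (am - 1) * Real.exp (-lm)) := by
          rw [← e5]; ring
      _ ≤ (x + y) ^ s * Real.exp (-(lp * (x + y))) * (y ^ (am - 1) * Real.exp (-(lm * y))) := by
          rw [← e4]
          have t1 : (2 * y) ^ s * Real.exp (-(lp * 2)) ≤ (x + y) ^ s * Real.exp (-(lp * (x+y))) := by
            have a1 := mul_le_mul_of_nonneg_right e1 (Real.exp_pos (-(lp*2))).le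
            have a2 := mul_le_mul_of_nonneg_left e2 (Real.rpow_nonneg hxy0.le s)
            exact le_trans a1 a2
          have t2 : y ^ (am - 1) * Real.exp (-lm) ≤ y ^ (am - 1) * Real.exp (-(lm * y)) :=
            mul_le_mul_of_nonneg_left e3 hyam
          have b1 : (0:ℝ) ≤ (2 * y) ^ s * Real.exp (-(lp * 2)) := by positivity
          have b2 : (0:ℝ) ≤ y ^ (am - 1) * Real.exp (-lm) := by positivity
          exact mul_le_mul t1 t2 b2 (by positivity)
  have step1 : (∫ y in Ioc x 1, bgPhi lp am lm s x y) ≤ bgH lp am lm s x := by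
    unfold bgH
    refine setIntegral_mono_set (bgPhi_int hx0 hlp ham hlm s) ?_ ?_
    · filter_upwards [ae_restrict_mem measurableSet_Ioi] with y hy
      have hy0 : (0:ℝ) < y := hy
      exact bgPhi_nonneg s hy0.le (by linarith)
    · exact HasSubset.Subset.eventuallyLE (fun y hy => lt_trans hx0 hy.1)
  have step3 : (∫ y in Ioc x 1, C * y⁻¹) = C * -Real.log x := by
    rw [MeasureTheory.integral_const_mul]
    have : (∫ y in Ioc x 1, y⁻¹) = ∫ y in x..1, y⁻¹ := by
      rw [intervalIntegral.integral_of_le (by linarith)]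
    rw [this, integral_inv_of_pos hx0 one_pos]
    rw [show (1:ℝ)/x = x⁻¹ by ring, Real.log_inv]
  linarith [step1, step2, le_of_eq step3.symm]

lemma bgC_pos (hap : 0 < ap) (hlp : 0 < lp) (ham : 0 < am) (hlm : 0 < lm) :
    0 < bgC ap lp am lm := by
  unfold bgC
  have g1 := Real.Gamma_pos_of_pos hap
  have g2 := Real.Gamma_pos_of_pos ham
  have p1 : (0:ℝ) < lp ^ ap := Real.rpow_pos_of_pos hlp ap
  have p2 : (0:ℝ) < lm ^ am := Real.rpow_pos_of_pos hlm am
  positivity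

lemma bg_repr (hap : 0 < ap) (hlp : 0 < lp) (ham : 0 < am) (hlm : 0 < lm) :
    ∀ x ∈ Ioi (0:ℝ), bilateralGammaDensity ap lp am lm x
      = bgC ap lp am lm * bgH lp am lm (ap - 1) x := by
  intro x hx
  have hx0 : (0:ℝ) < x := hx
  unfold bilateralGammaDensity bgH
  rw [← MeasureTheory.integral_const_mul]
  refine setIntegral_congr_fun measurableSet_Ioi (fun y hy => ?_)
  have hy0 : (0:ℝ) < y := hy
  have hxy : (0:ℝ) < x + y := by linarith
  unfold gammaDensity bgPhi bgW bgC
  rw [if_pos hxy, if_pos hy0]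
  have g1 := (Real.Gamma_pos_of_pos hap).ne'
  have g2 := (Real.Gamma_pos_of_pos ham).ne'
  field_simp

/-- Main induction: derivative structure of the bilateral Gamma density on `Ioi 0`. -/
lemma bg_deriv_formula (hap : 0 < ap) (hlp : 0 < lp) (ham : 0 < am) (hlm : 0 < lm) (k : ℕ) :
    ∃ e : ℕ → ℝ, e k = bgC ap lp am lm ∧
      ∀ x ∈ Ioi (0:ℝ), iteratedDeriv k (bilateralGammaDensity ap lp am lm) x
        = ∑ j ∈ Finset.range (k + 1), (bgP ap j * e j) * bgH lp am lm (ap - 1 - j) x := by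
  induction k with
  | zero =>
    refine ⟨fun _ => bgC ap lp am lm, rfl, fun x hx => ?_⟩
    rw [iteratedDeriv_zero]
    simp only [Finset.range_one, Finset.sum_singleton]
    rw [bg_repr hap hlp ham hlm x hx]
    norm_num [bgP]
  | succ k ih =>
    obtain ⟨e, hek, hfor⟩ := ih
    refine ⟨fun j => (if j = 0 then 0 else e (j - 1)) - lp * (if j = k + 1 then 0 else e j),
      by simp [hek], ?_⟩
    intro x hx
    have hx0 : (0:ℝ) < x := hx
    set H : ℕ → ℝ := fun j => bgH lp am lm (ap - 1 - j) x with hH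
    rw [iteratedDeriv_succ]
    have heq : iteratedDeriv k (bilateralGammaDensity ap lp am lm) =ᶠ[𝓝 x]
        fun x' => ∑ j ∈ Finset.range (k + 1), (bgP ap j * e j) * bgH lp am lm (ap - 1 - j) x' :=
      eventuallyEq_of_mem (Ioi_mem_nhds hx0) hfor
    rw [heq.deriv_eq]
    have hg : HasDerivAt
        (fun x' => ∑ j ∈ Finset.range (k + 1), (bgP ap j * e j) * bgH lp am lm (ap - 1 - j) x')
        (∑ j ∈ Finset.range (k + 1), (bgP ap j * e j) *
          ((ap - 1 - j) * bgH lp am lm (ap - 1 - j - 1) x - lp * bgH lp am lm (ap - 1 - j) x)) x :=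
      HasDerivAt.fun_sum fun j _ =>
        (bgH_hasDerivAt hx0 hlp ham hlm (ap - 1 - j)).const_mul _
    rw [hg.deriv]
    -- now pure sum algebra
    have cast1 : ∀ j : ℕ, bgH lp am lm (ap - 1 - (j:ℝ) - 1) x = H (j + 1) := by
      intro j
      rw [hH]
      norm_num
      congr 1
      push_cast
      ring
    calc ∑ j ∈ Finset.range (k + 1), (bgP ap j * e j) *
          ((ap - 1 - j) * bgH lp am lm (ap - 1 - j - 1) x - lp * bgH lp am lm (ap - 1 - j) x)
        = ∑ j ∈ Finset.range (k + 1),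
            ((bgP ap j * (ap - ((j:ℝ) + 1)) * e j) * H (j + 1) - lp * ((bgP ap j * e j) * H j)) := by
          refine Finset.sum_congr rfl (fun j _ => ?_)
          rw [cast1 j, hH]
          ring
      _ = (∑ j ∈ Finset.range (k + 1), (bgP ap (j + 1) * e j) * H (j + 1))
          - lp * ∑ j ∈ Finset.range (k + 1), (bgP ap j * e j) * H j := by
          rw [Finset.sum_sub_distrib, ← Finset.mul_sum]
          congr 1
          refine Finset.sum_congr rfl (fun j _ => ?_)
          simp only [bgP, Finset.prod_range_succ]
      _ = ∑ j ∈ Finset.range (k + 1 + 1),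
            (bgP ap j * ((if j = 0 then 0 else e (j - 1)) - lp * (if j = k + 1 then 0 else e j)))
              * H j := by
          have h1 : ∑ j ∈ Finset.range (k + 1 + 1), (bgP ap j * (if j = 0 then 0 else e (j-1))) * H j
              = ∑ j ∈ Finset.range (k + 1), (bgP ap (j + 1) * e j) * H (j + 1) := by
            rw [Finset.sum_range_succ']
            simp
          have h2 : ∑ j ∈ Finset.range (k + 1 + 1),
              (bgP ap j * (lp * (if j = k + 1 then 0 else e j))) * H j
              = lp * ∑ j ∈ Finset.range (k + 1), (bgP ap j * e j) * H j := by
            rw [Finset.sum_range_succ, if_pos rfl, Finset.mul_sum]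
            rw [show (bgP ap (k+1) * (lp * 0)) * H (k+1) = 0 by ring, add_zero]
            refine Finset.sum_congr rfl (fun j hj => ?_)
            rw [if_neg (by have := Finset.mem_range.mp hj; omega : ¬ j = k + 1)]
            ring
          rw [← h1, ← h2, ← Finset.sum_sub_distrib]
          refine Finset.sum_congr rfl (fun j _ => ?_)
          ring

end BilateralGammaAux

/-- With `N` the nonnegative integer satisfying `N < α⁺ + α⁻ ≤ N + 1`, the `N`-th
derivative of the bilateral Gamma density converges to a finite limit as `x ↓ 0`
if and only if `α⁺` is a positive integer. -/
theorem bilateralGammaDensity_iteratedDeriv_limit_at_zero (ap lp am lm : ℝ)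
    (hap : 0 < ap) (hlp : 0 < lp) (ham : 0 < am) (hlm : 0 < lm)
    (N : ℕ) (hN1 : (N : ℝ) < ap + am) (hN2 : ap + am ≤ (N : ℝ) + 1) :
    (∃ L : ℝ, Tendsto (iteratedDeriv N (bilateralGammaDensity ap lp am lm))
        (𝓝[>] (0 : ℝ)) (𝓝 L))
      ↔ ∃ n : ℕ, 0 < n ∧ ap = (n : ℝ) := by
  obtain ⟨e, hek, hfor⟩ := bg_deriv_formula hap hlp ham hlm N
  have hc0 : 0 < bgC ap lp am lm := bgC_pos hap hlp ham hlm
  have hapN : ap < (N : ℝ) + 1 := by linarith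
  -- the regular part and its limit
  have hA : ∀ j ∈ Finset.range N, ∃ Lj : ℝ,
      Tendsto (fun x => (bgP ap j * e j) * bgH lp am lm (ap - 1 - j) x)
        (𝓝[>] (0:ℝ)) (𝓝 ((bgP ap j * e j) * Lj)) := by
    intro j hj
    have hjN : (j : ℝ) ≤ (N : ℝ) - 1 := by
      have := Finset.mem_range.mp hj
      have : (j:ℝ) + 1 ≤ (N:ℝ) := by exact_mod_cast this
      linarith
    obtain ⟨Lj, hLj⟩ := bgH_tendsto_finite (s := ap - 1 - j) hlp ham hlm (by linarith)
    exact ⟨Lj, hLj.const_mul _⟩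
  choose Lf hLf using hA
  have hAtend : Tendsto
      (fun x => ∑ j ∈ Finset.range N, (bgP ap j * e j) * bgH lp am lm (ap - 1 - j) x)
      (𝓝[>] (0:ℝ)) (𝓝 (∑ j ∈ Finset.range N |>.attach,
        (bgP ap j.1 * e j.1) * Lf j.1 j.2)) := by
    rw [show (fun x => ∑ j ∈ Finset.range N, (bgP ap j * e j) * bgH lp am lm (ap - 1 - j) x)
      = fun x => ∑ j ∈ Finset.range N |>.attach,
          (bgP ap j.1 * e j.1) * bgH lp am lm (ap - 1 - j.1) x by
        funext x; rw [Finset.sum_attach (Finset.range N)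
          (fun j => (bgP ap j * e j) * bgH lp am lm (ap - 1 - j) x)]]
    exact tendsto_finset_sum _ (fun j _ => hLf j.1 j.2)
  set L₀ : ℝ := ∑ j ∈ Finset.range N |>.attach, (bgP ap j.1 * e j.1) * Lf j.1 j.2 with hL₀
  set A : ℝ → ℝ := fun x => ∑ j ∈ Finset.range N,
    (bgP ap j * e j) * bgH lp am lm (ap - 1 - j) x with hAdef
  have hsum : ∀ x ∈ Ioi (0:ℝ), iteratedDeriv N (bilateralGammaDensity ap lp am lm) x
      = A x + (bgP ap N * bgC ap lp am lm) * bgH lp am lm (ap - 1 - N) x := by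
    intro x hx
    rw [hfor x hx, Finset.sum_range_succ, hek]
  have hev : ∀ᶠ x in 𝓝[>] (0:ℝ), iteratedDeriv N (bilateralGammaDensity ap lp am lm) x
      = A x + (bgP ap N * bgC ap lp am lm) * bgH lp am lm (ap - 1 - N) x := by
    filter_upwards [self_mem_nhdsWithin] with x hx using hsum x hx
  constructor
  · rintro ⟨L, hL⟩
    by_contra hno
    push_neg at hno
    have hpN : bgP ap N ≠ 0 := by
      rw [bgP, Finset.prod_ne_zero_iff]
      intro i _
      intro h0
      have : ap = ((i + 1 : ℕ) : ℝ) := by push_cast; linarith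
      exact hno (i + 1) (Nat.succ_pos i) this
    have htend : Tendsto (fun x => A x + (bgP ap N * bgC ap lp am lm) *
        bgH lp am lm (ap - 1 - N) x) (𝓝[>] (0:ℝ)) (𝓝 L) := hL.congr' hev
    have hterm : Tendsto (fun x => (bgP ap N * bgC ap lp am lm) * bgH lp am lm (ap - 1 - N) x)
        (𝓝[>] (0:ℝ)) (𝓝 (L - L₀)) := by
      have := htend.sub hAtend
      refine this.congr (fun x => ?_)
      ring
    have hHlim : Tendsto (bgH lp am lm (ap - 1 - N)) (𝓝[>] (0:ℝ))
        (𝓝 ((bgP ap N * bgC ap lp am lm)⁻¹ * (L - L₀))) := by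
      have := hterm.const_mul (bgP ap N * bgC ap lp am lm)⁻¹
      refine this.congr (fun x => ?_)
      field_simp
    have hHtop : Tendsto (bgH lp am lm (ap - 1 - N)) (𝓝[>] (0:ℝ)) atTop :=
      bgH_tendsto_atTop hlp ham hlm (by linarith) (by linarith)
    exact not_tendsto_nhds_of_tendsto_atTop hHtop _ hHlim
  · rintro ⟨n, hn0, hapn⟩
    have hnN : n ≤ N := by
      have : (n : ℝ) < (N : ℝ) + 1 := by rw [← hapn]; exact hapN
      exact_mod_cast Nat.lt_succ_iff.mp (by exact_mod_cast this)
    have hpN : bgP ap N = 0 := by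
      refine Finset.prod_eq_zero (i := n - 1) (Finset.mem_range.mpr (by omega)) ?_
      have : ((n - 1 : ℕ) : ℝ) + 1 = (n : ℝ) := by
        have : (1:ℕ) ≤ n := hn0
        push_cast [Nat.cast_sub this]
        ring
      rw [this, hapn]
      ring
    refine ⟨L₀, ?_⟩
    have hev' : iteratedDeriv N (bilateralGammaDensity ap lp am lm) =ᶠ[𝓝[>] (0:ℝ)] A := by
      filter_upwards [hev] with x hx
      rw [hx, hpN]
      ring
    exact hAtend.congr' hev'.symm
end
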